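/- arXiv:1302.3927 — 2 statements merged into one kernel-verified Lean document; each statement's English description precedes it below -/
import Mathlib

section
/- Let M be a von Neumann algebra with no central summands of type I₁, P₁ ∈ M a nontrivial core-free projection with central carrier I, P₂ = I − P₁, and M_{ij} = P_i M P_j for i, j ∈ {1,2}. Let ξ be a complex scalar with ξ ≠ 0 and ξ ≠ 1, and let Φ : M → M be a nonlinear ξ-Lie derivation with Φ(P₁) = Φ(P₂) = 0. Then for i ≠ j in {1,2} and all T_{ii} ∈ M_{ii}, T_{jj} ∈ M_{jj}, T_{ij} ∈ M_{ij}: Φ(T_{ii} + T_{jj} + T_{ij}) = Φ(T_{ii}) + Φ(T_{jj}) + Φ(T_{ij}). -/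
variable {H : Type*} [NormedAddCommGroup H] [InnerProductSpace ℂ H] [CompleteSpace H]

/-- `P` is a projection (self-adjoint idempotent) belonging to the
von Neumann algebra `M`. -/
def VNProjection (M : VonNeumannAlgebra H) (P : H →L[ℂ] H) : Prop :=
  P ∈ M ∧ IsSelfAdjoint P ∧ P * P = P

/-- `Z` is a central projection of `M`: a projection in `M` commuting with every
element of `M`. -/
def VNCentralProjection (M : VonNeumannAlgebra H) (Z : H →L[ℂ] H) : Prop :=
  VNProjection M Z ∧ ∀ T ∈ M, Z * T = T * Z

/-- `P` is core-free: the only central projection `Q` of `M` with `Q ≤ P` is `0`. -/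
def VNCoreFree (M : VonNeumannAlgebra H) (P : H →L[ℂ] H) : Prop :=
  ∀ Q, VNCentralProjection M Q → Q * P = Q → Q = 0

/-- `Z` is the central carrier of `A`: the smallest central projection of `M`
with `Z * A = A`. -/
def VNCentralCarrier (M : VonNeumannAlgebra H) (A Z : H →L[ℂ] H) : Prop :=
  VNCentralProjection M Z ∧ Z * A = A ∧
    ∀ Q, VNCentralProjection M Q → Q * A = A → Z * Q = Z

/-- `M` has no central summands of type I₁: for every nonzero central projection `Z`
there are `A, B ∈ M` with `Z * (A * B - B * A) ≠ 0`. -/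
def VNNoTypeI1 (M : VonNeumannAlgebra H) : Prop :=
  ∀ Z, VNCentralProjection M Z → Z ≠ 0 → ∃ A ∈ M, ∃ B ∈ M, Z * (A * B - B * A) ≠ 0

set_option linter.unusedVariables false
set_option linter.unusedSectionVars false
set_option linter.unnecessarySimpa false

section AlgHelpers

variable {A : Type*} [Ring A] [Algebra ℂ A]

lemma ann_left {ξ : ℂ} (hξ0 : ξ ≠ 0) (hξ1 : ξ ≠ 1) {e S : A} (he : e * e = e)
    (h : e * S = ξ • (S * e)) : e * S = 0 ∧ S * e = 0 := by
  have hco : ξ - ξ * ξ ≠ 0 := by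
    have h1 : ξ * (1 - ξ) ≠ 0 :=
      mul_ne_zero hξ0 (sub_ne_zero.mpr fun hh => hξ1 hh.symm)
    intro hcontra
    apply h1
    rw [mul_sub, mul_one]
    exact hcontra
  have c1 : e * S * e = ξ • (S * e) := by
    have h' := congrArg (fun z => z * e) h
    simp only [smul_mul_assoc] at h'
    rw [mul_assoc S e e, he] at h'
    exact h'
  have c2 : e * S = (ξ * ξ) • (S * e) := by
    calc e * S = e * (e * S) := by rw [← mul_assoc, he]
      _ = e * (ξ • (S * e)) := by rw [h]
      _ = ξ • (e * (S * e)) := by rw [mul_smul_comm]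
      _ = ξ • (e * S * e) := by rw [mul_assoc]
      _ = ξ • (ξ • (S * e)) := by rw [c1]
      _ = (ξ * ξ) • (S * e) := by rw [smul_smul]
  have c3 : (ξ - ξ * ξ) • (S * e) = 0 := by
    rw [sub_smul, ← h, ← c2, sub_self]
  have hSe : S * e = 0 := by
    rcases smul_eq_zero.mp c3 with h' | h'
    · exact absurd h' hco
    · exact h'
  exact ⟨by rw [h, hSe, smul_zero], hSe⟩

lemma ann_right {ξ : ℂ} (hξ0 : ξ ≠ 0) (hξ1 : ξ ≠ 1) {e S : A} (he : e * e = e)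
    (h : S * e = ξ • (e * S)) : e * S = 0 ∧ S * e = 0 := by
  have hco : ξ - ξ * ξ ≠ 0 := by
    have h1 : ξ * (1 - ξ) ≠ 0 :=
      mul_ne_zero hξ0 (sub_ne_zero.mpr fun hh => hξ1 hh.symm)
    intro hcontra
    apply h1
    rw [mul_sub, mul_one]
    exact hcontra
  have c1 : e * S * e = ξ • (e * S) := by
    have h' := congrArg (fun z => e * z) h
    simp only [mul_smul_comm] at h'
    rw [← mul_assoc, ← mul_assoc, he] at h'
    exact h'
  have c2 : S * e = (ξ * ξ) • (e * S) := by
    calc S * e = S * e * e := by rw [mul_assoc, he]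
      _ = (ξ • (e * S)) * e := by rw [h]
      _ = ξ • (e * S * e) := by rw [smul_mul_assoc]
      _ = ξ • (ξ • (e * S)) := by rw [c1]
      _ = (ξ * ξ) • (e * S) := by rw [smul_smul]
  have c3 : (ξ - ξ * ξ) • (e * S) = 0 := by
    rw [sub_smul, ← h, ← c2, sub_self]
  have heS : e * S = 0 := by
    rcases smul_eq_zero.mp c3 with h' | h'
    · exact absurd h' hco
    · exact h'
  exact ⟨heS, by rw [h, heS, smul_zero]⟩

lemma offdiag_facts {e f T : A} (he : e * e = e) (hf : f * f = f)
    (hef : e * f = 0) (hfe : f * e = 0) (h : e * T * f = T) :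
    e * T = T ∧ T * f = T ∧ f * T = 0 ∧ T * e = 0 := by
  refine ⟨?_, ?_, ?_, ?_⟩
  · have h' := congrArg (fun z => e * z) h
    simp only [← mul_assoc] at h'
    rw [he] at h'
    rw [h] at h'
    exact h'.symm
  · have h' := congrArg (fun z => z * f) h
    simp only [mul_assoc] at h'
    rw [hf] at h'
    rw [← mul_assoc, h] at h'
    exact h'.symm
  · have h' := congrArg (fun z => f * z) h
    simp only [← mul_assoc] at h'
    rw [hfe, zero_mul, zero_mul] at h'
    exact h'.symm
  · have h' := congrArg (fun z => z * e) h
    simp only [mul_assoc] at h'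
    rw [hfe, mul_zero, mul_zero] at h'
    exact h'.symm

lemma diag_facts {e f T : A} (he : e * e = e)
    (hef : e * f = 0) (hfe : f * e = 0) (h : e * T * e = T) :
    e * T = T ∧ T * e = T ∧ f * T = 0 ∧ T * f = 0 := by
  refine ⟨?_, ?_, ?_, ?_⟩
  · have h' := congrArg (fun z => e * z) h
    simp only [← mul_assoc] at h'
    rw [he] at h'
    rw [h] at h'
    exact h'.symm
  · have h' := congrArg (fun z => z * e) h
    simp only [mul_assoc] at h'
    rw [he] at h'
    rw [← mul_assoc, h] at h'
    exact h'.symm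
  · have h' := congrArg (fun z => f * z) h
    simp only [← mul_assoc] at h'
    rw [hfe, zero_mul, zero_mul] at h'
    exact h'.symm
  · have h' := congrArg (fun z => z * f) h
    simp only [mul_assoc] at h'
    rw [hef, mul_zero, mul_zero] at h'
    exact h'.symm

end AlgHelpers


omit [CompleteSpace H] in
lemma memClosureInvariant (W : Submodule ℂ H) (T : H →L[ℂ] H) (h : ∀ w ∈ W, T w ∈ W) :
    ∀ v ∈ W.topologicalClosure, T v ∈ W.topologicalClosure := by
  intro v hv
  have hv' : v ∈ closure (W : Set H) := by
    rw [← Submodule.topologicalClosure_coe]; exact hv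
  have := map_mem_closure T.continuous hv' (fun w hw => h w hw)
  rw [← Submodule.topologicalClosure_coe] at this
  exact this

omit [CompleteSpace H] in
lemma vanishOnClosure (W : Submodule ℂ H) (P : H →L[ℂ] H) (h : ∀ w ∈ W, P w = 0) :
    ∀ v ∈ W.topologicalClosure, P v = 0 := by
  intro v hv
  have hv' : v ∈ closure (W : Set H) := by
    rw [← Submodule.topologicalClosure_coe]; exact hv
  have hclosed : IsClosed {y : H | P y = 0} := isClosed_eq P.continuous continuous_const
  exact closure_minimal (fun w hw => h w hw) hclosed hv'

lemma projComm (K : Submodule ℂ H) [CompleteSpace K] (T : H →L[ℂ] H)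
    (h1 : ∀ v ∈ K, T v ∈ K) (h2 : ∀ v ∈ K, (star T) v ∈ K) :
    T * (K.subtypeL ∘L K.orthogonalProjectionOnto) = (K.subtypeL ∘L K.orthogonalProjectionOnto) * T := by
  set E : H →L[ℂ] H := K.subtypeL ∘L K.orthogonalProjectionOnto with hE
  have hEK : ∀ v ∈ K, E v = v := fun v hv => Submodule.starProjection_eq_self_iff.mpr hv
  have hErange : ∀ x : H, E x ∈ K := fun x => (K.orthogonalProjectionOnto x).2
  ext x
  have hx : x - E x ∈ Kᗮ := Submodule.sub_starProjection_mem_orthogonal (K := K) x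
  have hperp : T (x - E x) ∈ Kᗮ := by
    rw [Submodule.mem_orthogonal]
    intro u hu
    have hadj : (inner ℂ ((ContinuousLinearMap.adjoint T) u) (x - E x) : ℂ)
        = inner ℂ u (T (x - E x)) := ContinuousLinearMap.adjoint_inner_left T (x - E x) u
    rw [← hadj]
    have hmem : (ContinuousLinearMap.adjoint T) u ∈ K := by
      rw [← ContinuousLinearMap.star_eq_adjoint]
      exact h2 u hu
    exact hx _ hmem
  have hE2 : E (T (x - E x)) = 0 := by
    show (K.orthogonalProjectionOnto (T (x - E x)) : H) = (0 : H)
    rw [Submodule.orthogonalProjectionOnto_apply_of_mem_orthogonal hperp]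
    rfl
  have hE1 : E (T (E x)) = T (E x) := hEK _ (h1 _ (hErange x))
  have hsplit : T x = T (E x) + T (x - E x) := by
    rw [← map_add]; congr 1; abel
  show T (E x) = E (T x)
  rw [hsplit, map_add, hE1, hE2, add_zero]

set_option maxHeartbeats 1000000 in
lemma keyLemma (M : VonNeumannAlgebra H) (P : H →L[ℂ] H) (hPmem : P ∈ M)
    (hPsa : IsSelfAdjoint P)
    (hcar : ∀ Q, VNCentralProjection M Q → Q * P = P → Q = 1)
    (S : H →L[ℂ] H) (hS : ∀ T ∈ M, P * (T * S) = 0) : S = 0 := by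
  classical
  let C : Set (H →L[ℂ] H) := Set.centralizer (M : Set (H →L[ℂ] H))
  let gen : Set H := {y | ∃ A ∈ C, ∃ B ∈ (M : Set (H →L[ℂ] H)), ∃ x : H, A (B (S x)) = y}
  let W : Submodule ℂ H := Submodule.span ℂ gen
  let K : Submodule ℂ H := W.topologicalClosure
  haveI : CompleteSpace K := (W.isClosed_topologicalClosure).completeSpace_coe
  let E : H →L[ℂ] H := K.subtypeL ∘L K.orthogonalProjectionOnto
  have hEsa : IsSelfAdjoint E := isSelfAdjoint_starProjection K
  have hEK : ∀ v ∈ K, E v = v := fun v hv => Submodule.starProjection_eq_self_iff.mpr hv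
  have hErange : ∀ x : H, E x ∈ K := fun x => (K.orthogonalProjectionOnto x).2
  -- invariance of W under M
  have hMgen : ∀ T ∈ M, ∀ w ∈ W, T w ∈ W := by
    intro T hT w hw
    induction hw using Submodule.span_induction with
    | mem y hy =>
      obtain ⟨A, hA, B, hB, x, rfl⟩ := hy
      have hTA : T * A = A * T := hA T hT
      have heq : T (A (B (S x))) = A ((T * B) (S x)) := by
        have := congrArg (fun F : H →L[ℂ] H => F (B (S x))) hTA
        simpa [ContinuousLinearMap.mul_apply] using this
      rw [heq]
      exact Submodule.subset_span ⟨A, hA, T * B, mul_mem hT hB, x, rfl⟩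
    | zero => rw [map_zero]; exact W.zero_mem
    | add a b _ _ ha hb => rw [map_add]; exact W.add_mem ha hb
    | smul c a _ ha => rw [map_smul]; exact W.smul_mem c ha
  have hCgen : ∀ A' ∈ C, ∀ w ∈ W, A' w ∈ W := by
    intro A' hA' w hw
    induction hw using Submodule.span_induction with
    | mem y hy =>
      obtain ⟨A, hA, B, hB, x, rfl⟩ := hy
      have heq : A' (A (B (S x))) = (A' * A) (B (S x)) := rfl
      rw [heq]
      exact Submodule.subset_span ⟨A' * A, Set.mul_mem_centralizer hA' hA, B, hB, x, rfl⟩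
    | zero => rw [map_zero]; exact W.zero_mem
    | add a b _ _ ha hb => rw [map_add]; exact W.add_mem ha hb
    | smul c a _ ha => rw [map_smul]; exact W.smul_mem c ha
  have hMinv : ∀ T ∈ M, ∀ v ∈ K, T v ∈ K :=
    fun T hT => memClosureInvariant W T (hMgen T hT)
  have hCinv : ∀ A' ∈ C, ∀ v ∈ K, A' v ∈ K :=
    fun A' hA' => memClosureInvariant W A' (hCgen A' hA')
  have hstarM : ∀ a ∈ (M : Set (H →L[ℂ] H)), star a ∈ (M : Set (H →L[ℂ] H)) :=
    fun a ha => star_mem ha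
  have hEM : E ∈ M := by
    have hmem : E ∈ Set.centralizer C := by
      intro A hA
      exact (projComm K A (hCinv A hA)
        (hCinv (star A) (Set.star_mem_centralizer' hstarM hA))).symm.symm
    rw [← SetLike.mem_coe, ← M.centralizer_centralizer]
    exact hmem
  have hEcomm : ∀ T ∈ M, E * T = T * E := by
    intro T hT
    exact (projComm K T (hMinv T hT) (hMinv (star T) (star_mem hT))).symm
  have hEE : E * E = E := by
    ext x
    show E (E x) = E x
    exact hEK _ (hErange x)
  have hPE : P * E = 0 := by
    have hgen0 : ∀ w ∈ W, P w = 0 := by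
      intro w hw
      induction hw using Submodule.span_induction with
      | mem y hy =>
        obtain ⟨A, hA, B, hB, x, rfl⟩ := hy
        have hPA : P * A = A * P := hA P hPmem
        have h1 : P (A (B (S x))) = A (P (B (S x))) := by
          have := congrArg (fun F : H →L[ℂ] H => F (B (S x))) hPA
          simpa [ContinuousLinearMap.mul_apply] using this
        have h2 : P (B (S x)) = 0 := by
          have := congrArg (fun F : H →L[ℂ] H => F x) (hS B hB)
          simpa [ContinuousLinearMap.mul_apply] using this
        rw [h1, h2, map_zero]
      | zero => rw [map_zero]
      | add a b _ _ ha hb => rw [map_add, ha, hb, add_zero]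
      | smul c a _ ha => rw [map_smul, ha, smul_zero]
    ext x
    show P (E x) = 0
    exact vanishOnClosure W P hgen0 _ (hErange x)
  have hEP : E * P = 0 := by
    have h : E * P = star (P * E) := by
      rw [star_mul, hEsa.star_eq, hPsa.star_eq]
    rw [h, hPE, star_zero]
  have hQ : VNCentralProjection M (1 - E) := by
    refine ⟨⟨sub_mem (one_mem M) hEM, (IsSelfAdjoint.one (R := H →L[ℂ] H)).sub hEsa, ?_⟩, ?_⟩
    · rw [sub_mul, mul_sub, mul_sub, one_mul, mul_one, hEE]
      abel
    · intro T hT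
      rw [sub_mul, mul_sub, one_mul, mul_one, hEcomm T hT]
  have hQP : (1 - E) * P = P := by
    rw [sub_mul, one_mul, hEP, sub_zero]
  have hEzero : E = 0 := sub_eq_self.mp (hcar (1 - E) hQ hQP)
  ext x
  have hgenx : S x ∈ K := by
    have hx : S x ∈ gen := ⟨1, Set.one_mem_centralizer, 1, one_mem M, x, rfl⟩
    exact W.le_topologicalClosure (Submodule.subset_span hx)
  have hfix := hEK _ hgenx
  rw [hEzero] at hfix
  simpa using hfix.symm

lemma centralCompl (M : VonNeumannAlgebra H) {Q : H →L[ℂ] H}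
    (h : VNCentralProjection M Q) : VNCentralProjection M (1 - Q) := by
  obtain ⟨⟨hmem, hsa, hid⟩, hcomm⟩ := h
  refine ⟨⟨sub_mem (one_mem M) hmem, (IsSelfAdjoint.one (R := H →L[ℂ] H)).sub hsa, ?_⟩, ?_⟩
  · rw [sub_mul, mul_sub, mul_sub, one_mul, mul_one, hid]
    abel
  · intro T hT
    rw [sub_mul, mul_sub, one_mul, mul_one, hcomm T hT]

set_option maxHeartbeats 1000000 in
lemma claim8_aux (M : VonNeumannAlgebra H)
    (e f : H →L[ℂ] H) (heM : e ∈ M) (hfM : f ∈ M)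
    (hesa : IsSelfAdjoint e) (hfsa : IsSelfAdjoint f)
    (hee : e * e = e) (hff : f * f = f) (hef : e * f = 0) (hfe : f * e = 0)
    (hsum : e + f = 1)
    (hcare : ∀ Q, VNCentralProjection M Q → Q * e = e → Q = 1)
    (hcarf : ∀ Q, VNCentralProjection M Q → Q * f = f → Q = 1)
    (ξ : ℂ) (hξ0 : ξ ≠ 0) (hξ1 : ξ ≠ 1)
    (Φ : (H →L[ℂ] H) → (H →L[ℂ] H))
    (hmaps : ∀ T ∈ M, Φ T ∈ M)
    (hlie : ∀ A ∈ M, ∀ B ∈ M,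
      Φ (A * B - ξ • (B * A)) =
        (Φ A * B - ξ • (B * Φ A)) + (A * Φ B - ξ • (Φ B * A)))
    (hΦe : Φ e = 0) (hΦf : Φ f = 0) :
    ∀ a ∈ M, e * a * e = a → ∀ b ∈ M, f * b * f = b → ∀ c ∈ M, e * c * f = c →
      Φ (a + b + c) = Φ a + Φ b + Φ c := by
  have hΦ0 : Φ (0 : H →L[ℂ] H) = 0 := by
    have := hlie 0 (zero_mem M) 0 (zero_mem M)
    simpa using this
  -- Claim C2 : additivity on M_jj + M_ij
  have C2 : ∀ b ∈ M, f * b * f = b → ∀ c ∈ M, e * c * f = c →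
      Φ (b + c) = Φ b + Φ c := by
    intro b hb hbf c hc hcf
    obtain ⟨hec, hcf2, hfc, hce⟩ := offdiag_facts hee hff hef hfe hcf
    obtain ⟨hfb, hbf2, heb, hbe⟩ := diag_facts hff hfe hef hbf
    have hW : b + c ∈ M := add_mem hb hc
    -- eq1
    have harg1 : e * (b + c) - ξ • ((b + c) * e) = c := by
      rw [mul_add, add_mul, heb, hec, hbe, hce, zero_add, add_zero, smul_zero, sub_zero]
    have eq1 := hlie e heM (b + c) hW
    rw [harg1, hΦe] at eq1
    simp only [zero_mul, mul_zero, smul_zero, sub_zero, zero_add, sub_self] at eq1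
    -- eq2
    have harg2 : e * c - ξ • (c * e) = c := by rw [hec, hce, smul_zero, sub_zero]
    have eq2 := hlie e heM c hc
    rw [harg2, hΦe] at eq2
    simp only [zero_mul, mul_zero, smul_zero, sub_zero, zero_add, sub_self] at eq2
    -- eq3
    have harg3 : e * b - ξ • (b * e) = 0 := by rw [heb, hbe, smul_zero, sub_zero]
    have eq3 := hlie e heM b hb
    rw [harg3, hΦe, hΦ0] at eq3
    simp only [zero_mul, mul_zero, smul_zero, sub_zero, zero_add, sub_self] at eq3
    -- componentwise relation
    have hrel : e * (Φ (b + c) - Φ b - Φ c) = ξ • ((Φ (b + c) - Φ b - Φ c) * e) := by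
      simp only [mul_sub, sub_mul, smul_sub]
      linear_combination (norm := module) eq2 + eq3 - eq1
    obtain ⟨heS, hSe⟩ := ann_left hξ0 hξ1 hee hrel
    -- kill the remaining corner using keyLemma
    have hfS : f * (Φ (b + c) - Φ b - Φ c) = 0 := by
      have hXstep : ∀ T ∈ M,
          e * (T * (f * (Φ (b + c) - Φ b - Φ c))) = 0 := by
        intro T hT
        have hXM : e * T * f ∈ M := mul_mem (mul_mem heM hT) hfM
        have hXc : (e * T * f) * c = 0 := by
          rw [← hec, ← mul_assoc, mul_assoc (e*T) f e, hfe, mul_zero, zero_mul]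
        have hbX : b * (e * T * f) = 0 := by
          rw [← mul_assoc, ← mul_assoc, hbe, zero_mul, zero_mul]
        have hcX : c * (e * T * f) = 0 := by
          rw [← mul_assoc, ← mul_assoc, hce, zero_mul, zero_mul]
        have hargA : (e * T * f) * (b + c) - ξ • ((b + c) * (e * T * f))
            = (e * T * f) * b := by
          rw [mul_add, add_mul, hXc, hbX, hcX, add_zero, add_zero, smul_zero, sub_zero]
        have eqA := hlie (e * T * f) hXM (b + c) hW
        rw [hargA] at eqA
        have hargB : (e * T * f) * b - ξ • (b * (e * T * f)) = (e * T * f) * b := by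
          rw [hbX, smul_zero, sub_zero]
        have eqB := hlie (e * T * f) hXM b hb
        rw [hargB] at eqB
        have hargC : (e * T * f) * c - ξ • (c * (e * T * f)) = 0 := by
          rw [hXc, hcX, smul_zero, sub_zero]
        have eqC := hlie (e * T * f) hXM c hc
        rw [hargC, hΦ0] at eqC
        have hXS : (e * T * f) * (Φ (b + c) - Φ b - Φ c)
            = ξ • ((Φ (b + c) - Φ b - Φ c) * (e * T * f)) := by
          simp only [mul_sub, sub_mul, smul_sub, mul_add, add_mul, smul_add] at eqA eqB eqC ⊢
          linear_combination (norm := module) eqB + eqC - eqA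
        have hSX : (Φ (b + c) - Φ b - Φ c) * (e * T * f) = 0 := by
          rw [← mul_assoc, ← mul_assoc, hSe, zero_mul, zero_mul]
        rw [hSX, smul_zero] at hXS
        calc e * (T * (f * (Φ (b + c) - Φ b - Φ c)))
            = (e * T * f) * (Φ (b + c) - Φ b - Φ c) := by
              simp only [mul_assoc]
          _ = 0 := hXS
      exact keyLemma M e heM hesa hcare _ hXstep
    have hS0 : Φ (b + c) - Φ b - Φ c = 0 := by
      have h1 : (1 : H →L[ℂ] H) * (Φ (b + c) - Φ b - Φ c) = 0 := by
        rw [← hsum, add_mul, heS, hfS, add_zero]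
      rwa [one_mul] at h1
    have := sub_eq_zero.mp (by rwa [sub_sub] at hS0)
    exact this
  -- Claim C1 : additivity on M_ii + M_ij
  have C1 : ∀ a ∈ M, e * a * e = a → ∀ c ∈ M, e * c * f = c →
      Φ (a + c) = Φ a + Φ c := by
    intro a ha hae c hc hcf
    obtain ⟨hec, hcf2, hfc, hce⟩ := offdiag_facts hee hff hef hfe hcf
    obtain ⟨hea, hae2, hfa, haf⟩ := diag_facts hee hef hfe hae
    have hW : a + c ∈ M := add_mem ha hc
    have harg1 : (a + c) * f - ξ • (f * (a + c)) = c := by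
      rw [add_mul, mul_add, haf, hcf2, hfa, hfc, zero_add, add_zero, smul_zero, sub_zero]
    have eq1 := hlie (a + c) hW f hfM
    rw [harg1, hΦf] at eq1
    simp only [zero_mul, mul_zero, smul_zero, sub_zero, add_zero, sub_self] at eq1
    have harg2 : c * f - ξ • (f * c) = c := by rw [hcf2, hfc, smul_zero, sub_zero]
    have eq2 := hlie c hc f hfM
    rw [harg2, hΦf] at eq2
    simp only [zero_mul, mul_zero, smul_zero, sub_zero, add_zero, sub_self] at eq2
    have harg3 : a * f - ξ • (f * a) = 0 := by rw [haf, hfa, smul_zero, sub_zero]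
    have eq3 := hlie a ha f hfM
    rw [harg3, hΦf, hΦ0] at eq3
    simp only [zero_mul, mul_zero, smul_zero, sub_zero, add_zero, sub_self] at eq3
    have hrel : (Φ (a + c) - Φ a - Φ c) * f = ξ • (f * (Φ (a + c) - Φ a - Φ c)) := by
      simp only [mul_sub, sub_mul, smul_sub]
      linear_combination (norm := module) eq2 + eq3 - eq1
    obtain ⟨hfS, hSf⟩ := ann_right hξ0 hξ1 hff hrel
    have hSX : ∀ T ∈ M, (Φ (a + c) - Φ a - Φ c) * (e * T * f) = 0 := by
      intro T hT
      have hXM : e * T * f ∈ M := mul_mem (mul_mem heM hT) hfM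
      have haX' : (e * T * f) * a = 0 := by
        rw [← hea, ← mul_assoc, mul_assoc (e*T) f e, hfe, mul_zero, zero_mul]
      have hXc : (e * T * f) * c = 0 := by
        rw [← hec, ← mul_assoc, mul_assoc (e*T) f e, hfe, mul_zero, zero_mul]
      have hcX : c * (e * T * f) = 0 := by
        rw [← mul_assoc, ← mul_assoc, hce, zero_mul, zero_mul]
      have hargA : (a + c) * (e * T * f) - ξ • ((e * T * f) * (a + c))
          = a * (e * T * f) := by
        rw [add_mul, mul_add, haX', hXc, hcX, add_zero, add_zero, smul_zero, sub_zero]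
      have eqA := hlie (a + c) hW (e * T * f) hXM
      rw [hargA] at eqA
      have hargB : a * (e * T * f) - ξ • ((e * T * f) * a) = a * (e * T * f) := by
        rw [haX', smul_zero, sub_zero]
      have eqB := hlie a ha (e * T * f) hXM
      rw [hargB] at eqB
      have hargC : c * (e * T * f) - ξ • ((e * T * f) * c) = 0 := by
        rw [hXc, hcX, smul_zero, sub_zero]
      have eqC := hlie c hc (e * T * f) hXM
      rw [hargC, hΦ0] at eqC
      have hSXrel : (Φ (a + c) - Φ a - Φ c) * (e * T * f)
          = ξ • ((e * T * f) * (Φ (a + c) - Φ a - Φ c)) := by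
        simp only [mul_sub, sub_mul, smul_sub, mul_add, add_mul, smul_add] at eqA eqB eqC ⊢
        linear_combination (norm := module) eqB + eqC - eqA
      have hXS : (e * T * f) * (Φ (a + c) - Φ a - Φ c) = 0 := by
        rw [mul_assoc, mul_assoc, hfS, mul_zero, mul_zero]
      rw [hXS, smul_zero] at hSXrel
      exact hSXrel
    -- adjoints
    have hstarStep : ∀ T ∈ M,
        f * (T * (e * star (Φ (a + c) - Φ a - Φ c))) = 0 := by
      intro T hT
      have h0 := hSX (star T) (star_mem hT)
      have h1 : f * (T * (e * star (Φ (a + c) - Φ a - Φ c))) = 0 := by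
        have h2 := congrArg star h0
        simpa [star_mul, star_sub, hesa.star_eq, hfsa.star_eq, star_star, mul_assoc]
          using h2
      exact h1
    have heS' : e * star (Φ (a + c) - Φ a - Φ c) = 0 :=
      keyLemma M f hfM hfsa hcarf _ hstarStep
    have hSe : (Φ (a + c) - Φ a - Φ c) * e = 0 := by
      have := congrArg star heS'
      rw [star_mul, star_star, hesa.star_eq, star_zero] at this
      exact this
    have hS0 : Φ (a + c) - Φ a - Φ c = 0 := by
      have h1 : (Φ (a + c) - Φ a - Φ c) * (1 : H →L[ℂ] H) = 0 := by
        rw [← hsum, mul_add, hSe, hSf, add_zero]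
      rwa [mul_one] at h1
    have := sub_eq_zero.mp (by rwa [sub_sub] at hS0)
    exact this
  -- Main claim
  intro a ha hae b hb hbf c hc hcf
  obtain ⟨hec, hcf2, hfc, hce⟩ := offdiag_facts hee hff hef hfe hcf
  obtain ⟨hea, hae2, hfa, haf⟩ := diag_facts hee hef hfe hae
  obtain ⟨hfb, hbf2, heb, hbe⟩ := diag_facts hff hfe hef hbf
  have hT : a + b + c ∈ M := add_mem (add_mem ha hb) hc
  have hξbM : b - ξ • b ∈ M := sub_mem hb (M.toStarSubalgebra.smul_mem hb ξ)
  have hξcM : -(ξ • c) ∈ M := neg_mem (M.toStarSubalgebra.smul_mem hc ξ)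
  have hξaM : a - ξ • a ∈ M := sub_mem ha (M.toStarSubalgebra.smul_mem ha ξ)
  -- relation from the f side
  have hDrel1 : f * (Φ (a + b + c) - Φ a - Φ b - Φ c)
      = ξ • ((Φ (a + b + c) - Φ a - Φ b - Φ c) * f) := by
    have hargT : f * (a + b + c) - ξ • ((a + b + c) * f)
        = (b - ξ • b) + -(ξ • c) := by
      simp only [mul_add, add_mul]
      rw [hfa, hfb, hfc, haf, hbf2, hcf2]
      module
    have heq1 := hlie f hfM (a + b + c) hT
    rw [hargT, hΦf] at heq1
    simp only [zero_mul, mul_zero, smul_zero, sub_zero, zero_add, sub_self] at heq1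
    have hAdiag : f * (b - ξ • b) * f = b - ξ • b := by
      simp only [mul_sub, sub_mul, mul_smul_comm, smul_mul_assoc]
      rw [hbf]
    have hBoff : e * -(ξ • c) * f = -(ξ • c) := by
      simp only [mul_neg, neg_mul, mul_smul_comm, smul_mul_assoc]
      rw [hcf]
    have hC2AB := C2 (b - ξ • b) hξbM hAdiag (-(ξ • c)) hξcM hBoff
    have harg2 : f * b - ξ • (b * f) = b - ξ • b := by rw [hfb, hbf2]
    have heq2 := hlie f hfM b hb
    rw [harg2, hΦf] at heq2
    simp only [zero_mul, mul_zero, smul_zero, sub_zero, zero_add, sub_self] at heq2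
    have harg3 : f * c - ξ • (c * f) = -(ξ • c) := by rw [hfc, hcf2, zero_sub]
    have heq3 := hlie f hfM c hc
    rw [harg3, hΦf] at heq3
    simp only [zero_mul, mul_zero, smul_zero, sub_zero, zero_add, sub_self] at heq3
    have harg4 : f * a - ξ • (a * f) = 0 := by rw [hfa, haf, smul_zero, sub_zero]
    have heq4 := hlie f hfM a ha
    rw [harg4, hΦf, hΦ0] at heq4
    simp only [zero_mul, mul_zero, smul_zero, sub_zero, zero_add, sub_self] at heq4
    simp only [mul_sub, sub_mul, smul_sub]
    linear_combination (norm := module) hC2AB - heq1 + heq2 + heq3 + heq4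
  obtain ⟨hfD, hDf⟩ := ann_left hξ0 hξ1 hff hDrel1
  -- relation from the e side
  have hDrel2 : (Φ (a + b + c) - Φ a - Φ b - Φ c) * e
      = ξ • (e * (Φ (a + b + c) - Φ a - Φ b - Φ c)) := by
    have hargT : (a + b + c) * e - ξ • (e * (a + b + c))
        = (a - ξ • a) + -(ξ • c) := by
      simp only [mul_add, add_mul]
      rw [hae2, hbe, hce, hea, heb, hec]
      module
    have heq1 := hlie (a + b + c) hT e heM
    rw [hargT, hΦe] at heq1
    simp only [zero_mul, mul_zero, smul_zero, sub_zero, add_zero, sub_self] at heq1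
    have hAdiag : e * (a - ξ • a) * e = a - ξ • a := by
      simp only [mul_sub, sub_mul, mul_smul_comm, smul_mul_assoc]
      rw [hae]
    have hBoff : e * -(ξ • c) * f = -(ξ • c) := by
      simp only [mul_neg, neg_mul, mul_smul_comm, smul_mul_assoc]
      rw [hcf]
    have hC1AB := C1 (a - ξ • a) hξaM hAdiag (-(ξ • c)) hξcM hBoff
    have harg2 : a * e - ξ • (e * a) = a - ξ • a := by rw [hae2, hea]
    have heq2 := hlie a ha e heM
    rw [harg2, hΦe] at heq2
    simp only [zero_mul, mul_zero, smul_zero, sub_zero, add_zero, sub_self] at heq2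
    have harg3 : c * e - ξ • (e * c) = -(ξ • c) := by rw [hce, hec, zero_sub]
    have heq3 := hlie c hc e heM
    rw [harg3, hΦe] at heq3
    simp only [zero_mul, mul_zero, smul_zero, sub_zero, add_zero, sub_self] at heq3
    have harg4 : b * e - ξ • (e * b) = 0 := by rw [hbe, heb, smul_zero, sub_zero]
    have heq4 := hlie b hb e heM
    rw [harg4, hΦe, hΦ0] at heq4
    simp only [zero_mul, mul_zero, smul_zero, sub_zero, add_zero, sub_self] at heq4
    simp only [mul_sub, sub_mul, smul_sub]
    linear_combination (norm := module) hC1AB - heq1 + heq2 + heq3 + heq4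
  obtain ⟨heD, hDe⟩ := ann_right hξ0 hξ1 hee hDrel2
  have hD0 : Φ (a + b + c) - Φ a - Φ b - Φ c = 0 := by
    have h1 : (1 : H →L[ℂ] H) * (Φ (a + b + c) - Φ a - Φ b - Φ c) = 0 := by
      rw [← hsum, add_mul, heD, hfD, add_zero]
    rwa [one_mul] at h1
  have h2 : Φ (a + b + c) - (Φ a + Φ b + Φ c) = 0 := by
    rw [← hD0]; abel
  exact sub_eq_zero.mp h2

set_option maxHeartbeats 1000000 in
/-- **Claim 8 of Theorem 1.2.** A nonlinear ξ-Lie derivation `Φ` with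
`Φ P₁ = Φ P₂ = 0` is additive on sums `T_{ii} + T_{jj} + T_{ij}` (`i ≠ j`). -/
theorem xiLie_additive_two_diag_plus_offdiag (M : VonNeumannAlgebra H)
    (hM : VNNoTypeI1 M)
    (P₁ : H →L[ℂ] H) (hproj : VNProjection M P₁)
    (hnt : P₁ ≠ 0 ∧ P₁ ≠ 1) (hcf : VNCoreFree M P₁)
    (hcc : VNCentralCarrier M P₁ 1)
    (ξ : ℂ) (hξ0 : ξ ≠ 0) (hξ1 : ξ ≠ 1)
    (Φ : (H →L[ℂ] H) → (H →L[ℂ] H))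
    (hmaps : ∀ T ∈ M, Φ T ∈ M)
    (hlie : ∀ A ∈ M, ∀ B ∈ M,
      Φ (A * B - ξ • (B * A)) =
        (Φ A * B - ξ • (B * Φ A)) + (A * Φ B - ξ • (Φ B * A)))
    (hP1 : Φ P₁ = 0) (hP2 : Φ (1 - P₁) = 0)
    (Pi Pj : H →L[ℂ] H)
    (hij : (Pi = P₁ ∧ Pj = 1 - P₁) ∨ (Pi = 1 - P₁ ∧ Pj = P₁)) :
    ∀ Tii ∈ M, Pi * Tii * Pi = Tii →
      ∀ Tjj ∈ M, Pj * Tjj * Pj = Tjj →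
        ∀ Tij ∈ M, Pi * Tij * Pj = Tij →
          Φ (Tii + Tjj + Tij) = Φ Tii + Φ Tjj + Φ Tij := by
  obtain ⟨hm, hsa, hid⟩ := hproj
  have hP2M : (1 : H →L[ℂ] H) - P₁ ∈ M := sub_mem (one_mem M) hm
  have hP2sa : IsSelfAdjoint ((1 : H →L[ℂ] H) - P₁) :=
    (IsSelfAdjoint.one (R := H →L[ℂ] H)).sub hsa
  have h2id : ((1 : H →L[ℂ] H) - P₁) * (1 - P₁) = 1 - P₁ := by
    rw [sub_mul, one_mul, mul_sub, mul_one, hid]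
    abel
  have hef : P₁ * ((1 : H →L[ℂ] H) - P₁) = 0 := by
    rw [mul_sub, mul_one, hid, sub_self]
  have hfe : ((1 : H →L[ℂ] H) - P₁) * P₁ = 0 := by
    rw [sub_mul, one_mul, hid, sub_self]
  have hsum1 : P₁ + ((1 : H →L[ℂ] H) - P₁) = 1 := by abel
  have hsum2 : ((1 : H →L[ℂ] H) - P₁) + P₁ = 1 := by abel
  have hcar1 : ∀ Q, VNCentralProjection M Q → Q * P₁ = P₁ → Q = 1 := by
    intro Q hQ h
    have := hcc.2.2 Q hQ h
    rwa [one_mul] at this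
  have hcar2 : ∀ Q, VNCentralProjection M Q → Q * (1 - P₁) = 1 - P₁ → Q = 1 := by
    intro Q hQ h
    have hR : VNCentralProjection M (1 - Q) := centralCompl M hQ
    have h0 : ((1 : H →L[ℂ] H) - Q) * (1 - P₁) = 0 := by
      rw [sub_mul, one_mul, h, sub_self]
    have hRP : ((1 : H →L[ℂ] H) - Q) * P₁ = 1 - Q := by
      have hexp : ((1 : H →L[ℂ] H) - Q) * (1 - P₁) = (1 - Q) - (1 - Q) * P₁ := by
        rw [mul_sub, mul_one]
      rw [h0] at hexp
      exact (sub_eq_zero.mp hexp.symm).symm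
    have hzero := hcf (1 - Q) hR hRP
    have := sub_eq_zero.mp hzero
    exact this.symm
  rcases hij with ⟨hi, hj⟩ | ⟨hi, hj⟩ <;> rw [hi, hj]
  · exact claim8_aux M P₁ (1 - P₁) hm hP2M hsa hP2sa hid h2id hef hfe hsum1
      hcar1 hcar2 ξ hξ0 hξ1 Φ hmaps hlie hP1 hP2
  · exact claim8_aux M (1 - P₁) P₁ hP2M hm hP2sa hsa h2id hid hfe hef hsum2
      hcar2 hcar1 ξ hξ0 hξ1 Φ hmaps hlie hP2 hP1
end

section
/- Let M be a von Neumann algebra with no central summands of type I₁, P₁ ∈ M a nontrivial core-free projection with central carrier I, P₂ = I − P₁, and M_{ij} = P_i M P_j for i, j ∈ {1,2}. Let ξ be a complex scalar with ξ ≠ 0 and ξ ≠ 1, and let Φ : M → M be a nonlinear ξ-Lie derivation with Φ(P₁) = Φ(P₂) = 0. Then for all T₁₁ ∈ M₁₁, T₁₂ ∈ M₁₂, T₂₁ ∈ M₂₁, T₂₂ ∈ M₂₂: Φ(T₁₁ + T₁₂ + T₂₁ + T₂₂) = Φ(T₁₁) + Φ(T₁₂) + Φ(T₂₁) + Φ(T₂₂).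 -/
set_option linter.unusedSectionVars false
set_option linter.unusedVariables false
set_option maxHeartbeats 1000000


variable {H : Type*} [NormedAddCommGroup H] [InnerProductSpace ℂ H] [CompleteSpace H]

section RingLevel

variable {R : Type*} [Ring R] [Algebra ℂ R]

/-- Auxiliary: applied form of a product identity. -/
lemma mz {a b c : R} (h : a * b = c) : ∀ z : R, a * (b * z) = c * z := by
  intro z; rw [← mul_assoc, h]

/-- Bundle of hypotheses for the purely algebraic part of the argument. -/
structure XiSetup (R : Type*) [Ring R] [Algebra ℂ R] where
  ξ : ℂ
  P : R
  Q : R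
  Mem : R → Prop
  Φ : R → R
  hξ0 : ξ ≠ 0
  hξ1 : ξ ≠ 1
  hPP : P * P = P
  hPQ : P * Q = 0
  hQP : Q * P = 0
  hQQ : Q * Q = Q
  hPQ1 : P + Q = 1
  hPm : Mem P
  hQm : Mem Q
  memMul : ∀ {a b}, Mem a → Mem b → Mem (a * b)
  memAdd : ∀ {a b}, Mem a → Mem b → Mem (a + b)
  memSmul : ∀ (c : ℂ) {a}, Mem a → Mem (c • a)
  hlie : ∀ a, Mem a → ∀ b, Mem b →
    Φ (a * b - ξ • (b * a)) = (Φ a * b - ξ • (b * Φ a)) + (a * Φ b - ξ • (Φ b * a))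
  hP0 : Φ P = 0
  hQ0 : Φ Q = 0
  annRQ : ∀ C, (∀ T, Mem T → C * (T * Q) = 0) → C = 0
  annRP : ∀ C, (∀ T, Mem T → C * (T * P) = 0) → C = 0
  annLQ : ∀ C, (∀ T, Mem T → Q * (T * C) = 0) → C = 0
  annLP : ∀ C, (∀ T, Mem T → P * (T * C) = 0) → C = 0

namespace XiSetup

variable (s : XiSetup R)

lemma hξ1' : (1 : ℂ) - s.ξ ≠ 0 := sub_ne_zero.mpr (Ne.symm s.hξ1)

/-- Facts about a `M₁₂` element. -/
lemma m12 {A : R} (hA : s.P * A * s.Q = A) :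
    s.P * A = A ∧ A * s.Q = A ∧ s.Q * A = 0 ∧ A * s.P = 0 := by
  obtain ⟨ξ, P, Q, Mem, Φ, hξ0, hξ1, hPP, hPQ, hQP, hQQ, hPQ1, rest⟩ := s
  refine ⟨?_, ?_, ?_, ?_⟩ <;>
    · rw [← hA]
      simp only [mul_assoc, mz hPP, mz hPQ, mz hQP, mz hQQ, hPP, hPQ, hQP, hQQ,
        zero_mul, mul_zero]

lemma m21 {A : R} (hA : s.Q * A * s.P = A) :
    s.Q * A = A ∧ A * s.P = A ∧ s.P * A = 0 ∧ A * s.Q = 0 := by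
  obtain ⟨ξ, P, Q, Mem, Φ, hξ0, hξ1, hPP, hPQ, hQP, hQQ, hPQ1, rest⟩ := s
  refine ⟨?_, ?_, ?_, ?_⟩ <;>
    · rw [← hA]
      simp only [mul_assoc, mz hPP, mz hPQ, mz hQP, mz hQQ, hPP, hPQ, hQP, hQQ,
        zero_mul, mul_zero]

lemma m11 {A : R} (hA : s.P * A * s.P = A) :
    s.P * A = A ∧ A * s.P = A ∧ s.Q * A = 0 ∧ A * s.Q = 0 := by
  obtain ⟨ξ, P, Q, Mem, Φ, hξ0, hξ1, hPP, hPQ, hQP, hQQ, hPQ1, rest⟩ := s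
  refine ⟨?_, ?_, ?_, ?_⟩ <;>
    · rw [← hA]
      simp only [mul_assoc, mz hPP, mz hPQ, mz hQP, mz hQQ, hPP, hPQ, hQP, hQQ,
        zero_mul, mul_zero]

lemma m22 {A : R} (hA : s.Q * A * s.Q = A) :
    s.Q * A = A ∧ A * s.Q = A ∧ s.P * A = 0 ∧ A * s.P = 0 := by
  obtain ⟨ξ, P, Q, Mem, Φ, hξ0, hξ1, hPP, hPQ, hQP, hQQ, hPQ1, rest⟩ := s
  refine ⟨?_, ?_, ?_, ?_⟩ <;>
    · rw [← hA]
      simp only [mul_assoc, mz hPP, mz hPQ, mz hQP, mz hQQ, hPP, hPQ, hQP, hQQ,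
        zero_mul, mul_zero]

lemma mem0 : s.Mem 0 := by
  have := s.memSmul 0 s.hPm
  rwa [zero_smul] at this

lemma phi0 : s.Φ 0 = 0 := by
  have h := s.hlie 0 s.mem0 0 s.mem0
  simpa using h



lemma mzz {a b c : R} (h : a * (b * c) = 0) : ∀ z : R, a * (b * (c * z)) = 0 := by
  intro z
  rw [show a * (b * (c * z)) = (a * (b * c)) * z by rw [mul_assoc, mul_assoc], h, zero_mul]

/-- Corner extraction from a `Q`-relation. -/
lemma corners_of_Qrel {D : R} (h : s.Q * D - s.ξ • (D * s.Q) = 0) :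
    s.P * (D * s.Q) = 0 ∧ s.Q * (D * s.P) = 0 ∧ s.Q * (D * s.Q) = 0 := by
  refine ⟨?_, ?_, ?_⟩
  · have e := congrArg (fun y => s.P * (y * s.Q)) h
    simp only [mul_sub, sub_mul, mul_add, add_mul, mul_smul_comm, smul_mul_assoc, mul_assoc,
      mz s.hPP, mz s.hPQ, mz s.hQP, mz s.hQQ, s.hPP, s.hPQ, s.hQP, s.hQQ,
      mul_neg, neg_mul, smul_neg, neg_zero, neg_neg, zero_mul, mul_zero, smul_zero,
      sub_zero, zero_sub, add_zero, zero_add] at e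
    have e2 : s.ξ • (s.P * (D * s.Q)) = 0 := by rw [← neg_eq_zero]; exact e
    exact (smul_eq_zero.mp e2).resolve_left s.hξ0
  · have e := congrArg (fun y => s.Q * (y * s.P)) h
    simp only [mul_sub, sub_mul, mul_add, add_mul, mul_smul_comm, smul_mul_assoc, mul_assoc,
      mz s.hPP, mz s.hPQ, mz s.hQP, mz s.hQQ, s.hPP, s.hPQ, s.hQP, s.hQQ,
      mul_neg, neg_mul, smul_neg, neg_zero, neg_neg, zero_mul, mul_zero, smul_zero,
      sub_zero, zero_sub, add_zero, zero_add] at e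
    exact e
  · have e := congrArg (fun y => s.Q * (y * s.Q)) h
    simp only [mul_sub, sub_mul, mul_add, add_mul, mul_smul_comm, smul_mul_assoc, mul_assoc,
      mz s.hPP, mz s.hPQ, mz s.hQP, mz s.hQQ, s.hPP, s.hPQ, s.hQP, s.hQQ,
      mul_neg, neg_mul, smul_neg, neg_zero, neg_neg, zero_mul, mul_zero, smul_zero,
      sub_zero, zero_sub, add_zero, zero_add] at e
    have e2 : ((1 : ℂ) - s.ξ) • (s.Q * (D * s.Q)) = 0 := by
      rw [sub_smul, one_smul]; exact e
    exact (smul_eq_zero.mp e2).resolve_left s.hξ1'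

/-- Corner extraction from a `P`-relation. -/
lemma corners_of_Prel {D : R} (h : s.P * D - s.ξ • (D * s.P) = 0) :
    s.P * (D * s.P) = 0 ∧ s.P * (D * s.Q) = 0 ∧ s.Q * (D * s.P) = 0 := by
  refine ⟨?_, ?_, ?_⟩
  · have e := congrArg (fun y => s.P * (y * s.P)) h
    simp only [mul_sub, sub_mul, mul_add, add_mul, mul_smul_comm, smul_mul_assoc, mul_assoc,
      mz s.hPP, mz s.hPQ, mz s.hQP, mz s.hQQ, s.hPP, s.hPQ, s.hQP, s.hQQ,
      mul_neg, neg_mul, smul_neg, neg_zero, neg_neg, zero_mul, mul_zero, smul_zero,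
      sub_zero, zero_sub, add_zero, zero_add] at e
    have e2 : ((1 : ℂ) - s.ξ) • (s.P * (D * s.P)) = 0 := by
      rw [sub_smul, one_smul]; exact e
    exact (smul_eq_zero.mp e2).resolve_left s.hξ1'
  · have e := congrArg (fun y => s.P * (y * s.Q)) h
    simp only [mul_sub, sub_mul, mul_add, add_mul, mul_smul_comm, smul_mul_assoc, mul_assoc,
      mz s.hPP, mz s.hPQ, mz s.hQP, mz s.hQQ, s.hPP, s.hPQ, s.hQP, s.hQQ,
      mul_neg, neg_mul, smul_neg, neg_zero, neg_neg, zero_mul, mul_zero, smul_zero,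
      sub_zero, zero_sub, add_zero, zero_add] at e
    exact e
  · have e := congrArg (fun y => s.Q * (y * s.P)) h
    simp only [mul_sub, sub_mul, mul_add, add_mul, mul_smul_comm, smul_mul_assoc, mul_assoc,
      mz s.hPP, mz s.hPQ, mz s.hQP, mz s.hQQ, s.hPP, s.hPQ, s.hQP, s.hQQ,
      mul_neg, neg_mul, smul_neg, neg_zero, neg_neg, zero_mul, mul_zero, smul_zero,
      sub_zero, zero_sub, add_zero, zero_add] at e
    have e2 : s.ξ • (s.Q * (D * s.P)) = 0 := by rw [← neg_eq_zero]; exact e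
    exact (smul_eq_zero.mp e2).resolve_left s.hξ0

/-- Recompose an element from vanishing corners. -/
lemma recompose {D : R} (h11 : s.P * (D * s.P) = 0) (h12 : s.P * (D * s.Q) = 0)
    (h21 : s.Q * (D * s.P) = 0) (h22 : s.Q * (D * s.Q) = 0) : D = 0 := by
  have h1 : D = (s.P + s.Q) * (D * (s.P + s.Q)) := by rw [s.hPQ1, mul_one, one_mul]
  rw [h1]
  simp only [mul_add, add_mul, h11, h12, h21, h22, add_zero, zero_add]

/-- Structure of `Φ` on `M₁₂`: vanishing diagonal corners. -/
lemma S12 {A : R} (hm : s.Mem A) (hA : s.P * A * s.Q = A) :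
    s.P * s.Φ A * s.P = 0 ∧ s.Q * s.Φ A * s.Q = 0 := by
  obtain ⟨h1, h2, h3, h4⟩ := s.m12 hA
  have h := s.hlie s.P s.hPm A hm
  rw [h1, h4, s.hP0] at h
  simp only [smul_zero, sub_zero, zero_mul, mul_zero, zero_add] at h
  -- h : Φ A = P * Φ A - ξ • (Φ A * P)
  constructor
  · have e := congrArg (fun y => s.P * (y * s.P)) h
    simp only [mul_sub, sub_mul, mul_add, add_mul, mul_smul_comm, smul_mul_assoc, mul_assoc,
      mz s.hPP, mz s.hPQ, mz s.hQP, mz s.hQQ, s.hPP, s.hPQ, s.hQP, s.hQQ,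
      mul_neg, neg_mul, smul_neg, neg_zero, neg_neg, zero_mul, mul_zero, smul_zero, sub_zero, zero_sub, add_zero, zero_add] at e
    have e2 : s.ξ • (s.P * (s.Φ A * s.P)) = 0 := sub_eq_self.mp e.symm
    have e3 := (smul_eq_zero.mp e2).resolve_left s.hξ0
    rw [mul_assoc]; exact e3
  · have e := congrArg (fun y => s.Q * (y * s.Q)) h
    simp only [mul_sub, sub_mul, mul_add, add_mul, mul_smul_comm, smul_mul_assoc, mul_assoc,
      mz s.hPP, mz s.hPQ, mz s.hQP, mz s.hQQ, s.hPP, s.hPQ, s.hQP, s.hQQ,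
      mul_neg, neg_mul, smul_neg, neg_zero, neg_neg, zero_mul, mul_zero, smul_zero, sub_zero, zero_sub, add_zero, zero_add] at e
    rw [mul_assoc]; exact e

/-- Structure of `Φ` on `M₂₁`: vanishing diagonal corners. -/
lemma S21 {A : R} (hm : s.Mem A) (hA : s.Q * A * s.P = A) :
    s.P * s.Φ A * s.P = 0 ∧ s.Q * s.Φ A * s.Q = 0 := by
  obtain ⟨h1, h2, h3, h4⟩ := s.m21 hA
  have h := s.hlie s.Q s.hQm A hm
  rw [h1, h4, s.hQ0] at h
  simp only [smul_zero, sub_zero, zero_mul, mul_zero, zero_add] at h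
  -- h : Φ A = Q * Φ A - ξ • (Φ A * Q)
  constructor
  · have e := congrArg (fun y => s.P * (y * s.P)) h
    simp only [mul_sub, sub_mul, mul_add, add_mul, mul_smul_comm, smul_mul_assoc, mul_assoc,
      mz s.hPP, mz s.hPQ, mz s.hQP, mz s.hQQ, s.hPP, s.hPQ, s.hQP, s.hQQ,
      mul_neg, neg_mul, smul_neg, neg_zero, neg_neg, zero_mul, mul_zero, smul_zero, sub_zero, zero_sub, add_zero, zero_add] at e
    rw [mul_assoc]; exact e
  · have e := congrArg (fun y => s.Q * (y * s.Q)) h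
    simp only [mul_sub, sub_mul, mul_add, add_mul, mul_smul_comm, smul_mul_assoc, mul_assoc,
      mz s.hPP, mz s.hPQ, mz s.hQP, mz s.hQQ, s.hPP, s.hPQ, s.hQP, s.hQQ,
      mul_neg, neg_mul, smul_neg, neg_zero, neg_neg, zero_mul, mul_zero, smul_zero, sub_zero, zero_sub, add_zero, zero_add] at e
    have e2 : s.ξ • (s.Q * (s.Φ A * s.Q)) = 0 := sub_eq_self.mp e.symm
    have e3 := (smul_eq_zero.mp e2).resolve_left s.hξ0
    rw [mul_assoc]; exact e3

/-- `Φ` preserves `M₁₁`. -/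
lemma S11 {A : R} (hm : s.Mem A) (hA : s.P * A * s.P = A) :
    s.P * s.Φ A * s.P = s.Φ A := by
  obtain ⟨h1, h2, h3, h4⟩ := s.m11 hA
  have h := s.hlie s.Q s.hQm A hm
  rw [h3, h4, s.hQ0] at h
  simp only [smul_zero, sub_zero, zero_mul, mul_zero, zero_add, zero_sub, smul_zero, s.phi0] at h
  -- h : 0 = Q * Φ A - ξ • (Φ A * Q)
  have eQP : s.Q * (s.Φ A * s.P) = 0 := by
    have e := congrArg (fun y => s.Q * (y * s.P)) h
    simp only [mul_sub, sub_mul, mul_add, add_mul, mul_smul_comm, smul_mul_assoc, mul_assoc,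
      mz s.hPP, mz s.hPQ, mz s.hQP, mz s.hQQ, s.hPP, s.hPQ, s.hQP, s.hQQ,
      mul_neg, neg_mul, smul_neg, neg_zero, neg_neg, zero_mul, mul_zero, smul_zero, sub_zero, zero_sub, add_zero, zero_add] at e
    exact e.symm
  have ePQ : s.P * (s.Φ A * s.Q) = 0 := by
    have e := congrArg (fun y => s.P * (y * s.Q)) h
    simp only [mul_sub, sub_mul, mul_add, add_mul, mul_smul_comm, smul_mul_assoc, mul_assoc,
      mz s.hPP, mz s.hPQ, mz s.hQP, mz s.hQQ, s.hPP, s.hPQ, s.hQP, s.hQQ,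
      mul_neg, neg_mul, smul_neg, neg_zero, neg_neg, zero_mul, mul_zero, smul_zero, sub_zero, zero_sub, add_zero, zero_add] at e
    have e2 : s.ξ • (s.P * (s.Φ A * s.Q)) = 0 := by
      rw [← neg_eq_zero]; exact e.symm
    exact (smul_eq_zero.mp e2).resolve_left s.hξ0
  have eQQ : s.Q * (s.Φ A * s.Q) = 0 := by
    have e := congrArg (fun y => s.Q * (y * s.Q)) h
    simp only [mul_sub, sub_mul, mul_add, add_mul, mul_smul_comm, smul_mul_assoc, mul_assoc,
      mz s.hPP, mz s.hPQ, mz s.hQP, mz s.hQQ, s.hPP, s.hPQ, s.hQP, s.hQQ,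
      mul_neg, neg_mul, smul_neg, neg_zero, neg_neg, zero_mul, mul_zero, smul_zero, sub_zero, zero_sub, add_zero, zero_add] at e
    have e2 : ((1 : ℂ) - s.ξ) • (s.Q * (s.Φ A * s.Q)) = 0 := by
      rw [sub_smul, one_smul]; exact e.symm
    exact (smul_eq_zero.mp e2).resolve_left s.hξ1'
  have dec : s.Φ A = (s.P + s.Q) * s.Φ A * (s.P + s.Q) := by
    rw [s.hPQ1, one_mul, mul_one]
  calc s.P * s.Φ A * s.P = s.P * (s.Φ A * s.P) := by rw [mul_assoc]
    _ = s.Φ A := by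
        conv_rhs => rw [dec]
        simp only [add_mul, mul_add, mul_assoc, eQP, ePQ, eQQ, add_zero, zero_add, mul_zero]

/-- `Φ` preserves `M₂₂`. -/
lemma S22 {A : R} (hm : s.Mem A) (hA : s.Q * A * s.Q = A) :
    s.Q * s.Φ A * s.Q = s.Φ A := by
  obtain ⟨h1, h2, h3, h4⟩ := s.m22 hA
  have h := s.hlie s.P s.hPm A hm
  rw [h3, h4, s.hP0] at h
  simp only [smul_zero, sub_zero, zero_mul, mul_zero, zero_add, zero_sub, smul_zero, s.phi0] at h
  -- h : 0 = P * Φ A - ξ • (Φ A * P)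
  have ePQ : s.P * (s.Φ A * s.Q) = 0 := by
    have e := congrArg (fun y => s.P * (y * s.Q)) h
    simp only [mul_sub, sub_mul, mul_add, add_mul, mul_smul_comm, smul_mul_assoc, mul_assoc,
      mz s.hPP, mz s.hPQ, mz s.hQP, mz s.hQQ, s.hPP, s.hPQ, s.hQP, s.hQQ,
      mul_neg, neg_mul, smul_neg, neg_zero, neg_neg, zero_mul, mul_zero, smul_zero, sub_zero, zero_sub, add_zero, zero_add] at e
    exact e.symm
  have eQP : s.Q * (s.Φ A * s.P) = 0 := by
    have e := congrArg (fun y => s.Q * (y * s.P)) h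
    simp only [mul_sub, sub_mul, mul_add, add_mul, mul_smul_comm, smul_mul_assoc, mul_assoc,
      mz s.hPP, mz s.hPQ, mz s.hQP, mz s.hQQ, s.hPP, s.hPQ, s.hQP, s.hQQ,
      mul_neg, neg_mul, smul_neg, neg_zero, neg_neg, zero_mul, mul_zero, smul_zero, sub_zero, zero_sub, add_zero, zero_add] at e
    have e2 : s.ξ • (s.Q * (s.Φ A * s.P)) = 0 := by
      rw [← neg_eq_zero]; exact e.symm
    exact (smul_eq_zero.mp e2).resolve_left s.hξ0
  have ePP : s.P * (s.Φ A * s.P) = 0 := by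
    have e := congrArg (fun y => s.P * (y * s.P)) h
    simp only [mul_sub, sub_mul, mul_add, add_mul, mul_smul_comm, smul_mul_assoc, mul_assoc,
      mz s.hPP, mz s.hPQ, mz s.hQP, mz s.hQQ, s.hPP, s.hPQ, s.hQP, s.hQQ,
      mul_neg, neg_mul, smul_neg, neg_zero, neg_neg, zero_mul, mul_zero, smul_zero, sub_zero, zero_sub, add_zero, zero_add] at e
    have e2 : ((1 : ℂ) - s.ξ) • (s.P * (s.Φ A * s.P)) = 0 := by
      rw [sub_smul, one_smul]; exact e.symm
    exact (smul_eq_zero.mp e2).resolve_left s.hξ1'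
  have dec : s.Φ A = (s.P + s.Q) * s.Φ A * (s.P + s.Q) := by
    rw [s.hPQ1, one_mul, mul_one]
  calc s.Q * s.Φ A * s.Q = s.Q * (s.Φ A * s.Q) := by rw [mul_assoc]
    _ = s.Φ A := by
        conv_rhs => rw [dec]
        simp only [add_mul, mul_add, mul_assoc, ePQ, eQP, ePP, add_zero, zero_add, mul_zero]
-- appended to c.lean after testing

/-- Additivity on `M₁₂ + M₂₁`. -/
lemma ClaimIII {A B : R} (hmA : s.Mem A) (hA : s.P * A * s.Q = A)
    (hmB : s.Mem B) (hB : s.Q * B * s.P = B) :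
    s.Φ (A + B) = s.Φ A + s.Φ B := by
  obtain ⟨hA1, hA2, hA3, hA4⟩ := s.m12 hA
  obtain ⟨hB1, hB2, hB3, hB4⟩ := s.m21 hB
  have hmS : s.Mem (A + B) := s.memAdd hmA hmB
  -- Step (a): diagonal corners of Φ(A+B) vanish
  have e1 := s.hlie s.Q s.hQm (A + B) hmS
  have e2 := s.hlie (A + B) hmS s.P s.hPm
  simp only [mul_add, add_mul, hA3, hB1, hA2, hB4, hA1, hB2, hA4, hB3, zero_add, add_zero,
    s.hQ0, s.hP0, zero_mul, mul_zero, smul_zero, sub_zero, zero_sub, zero_add, add_zero] at e1 e2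
  -- e1 : Φ (B - ξ•A) = Q * Φ(A+B) - ξ • (Φ(A+B) * Q)
  -- e2 : Φ (B - ξ•A) = Φ(A+B) * P - ξ • (P * Φ(A+B))
  have ediag := e1.symm.trans e2
  have hFPP : s.P * (s.Φ (A + B) * s.P) = 0 := by
    have e := congrArg (fun y => s.P * (y * s.P)) ediag
    simp only [mul_sub, sub_mul, mul_add, add_mul, mul_smul_comm, smul_mul_assoc, mul_assoc,
      mz s.hPP, mz s.hPQ, mz s.hQP, mz s.hQQ, s.hPP, s.hPQ, s.hQP, s.hQQ,
      mul_neg, neg_mul, smul_neg, neg_zero, neg_neg, zero_mul, mul_zero, smul_zero, sub_zero, zero_sub, add_zero, zero_add] at e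
    have e2' : ((1 : ℂ) - s.ξ) • (s.P * (s.Φ (A + B) * s.P)) = 0 := by
      rw [sub_smul, one_smul]; exact e.symm
    exact (smul_eq_zero.mp e2').resolve_left s.hξ1'
  have hFQQ : s.Q * (s.Φ (A + B) * s.Q) = 0 := by
    have e := congrArg (fun y => s.Q * (y * s.Q)) ediag
    simp only [mul_sub, sub_mul, mul_add, add_mul, mul_smul_comm, smul_mul_assoc, mul_assoc,
      mz s.hPP, mz s.hPQ, mz s.hQP, mz s.hQQ, s.hPP, s.hPQ, s.hQP, s.hQQ,
      mul_neg, neg_mul, smul_neg, neg_zero, neg_neg, zero_mul, mul_zero, smul_zero, sub_zero, zero_sub, add_zero, zero_add] at e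
    have e2' : ((1 : ℂ) - s.ξ) • (s.Q * (s.Φ (A + B) * s.Q)) = 0 := by
      rw [sub_smul, one_smul]; exact e
    exact (smul_eq_zero.mp e2').resolve_left s.hξ1'
  -- Step (b): the (2,1) corner of the defect vanishes
  have hQDP : s.Q * (s.Φ (A + B) * s.P) - s.Q * (s.Φ A * s.P) - s.Q * (s.Φ B * s.P) = 0 := by
    apply s.annRQ
    intro T hT
    have hmX : s.Mem (s.P * (T * s.Q)) := s.memMul s.hPm (s.memMul hT s.hQm)
    have u1 := s.hlie (A + B) hmS (s.P * (T * s.Q)) hmX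
    have u2 := s.hlie B hmB (s.P * (T * s.Q)) hmX
    have u3 := s.hlie A hmA (s.P * (T * s.Q)) hmX
    have hargs : (A + B) * (s.P * (T * s.Q)) - s.ξ • ((s.P * (T * s.Q)) * (A + B))
        = B * (s.P * (T * s.Q)) - s.ξ • ((s.P * (T * s.Q)) * B) := by
      simp only [add_mul, mul_add, mul_assoc, mz hA4, mz hB2, hA3, hB1, hA1, hA2,
        zero_mul, mul_zero, smul_zero, sub_zero, zero_add, add_zero]
    have hargs0 : A * (s.P * (T * s.Q)) - s.ξ • ((s.P * (T * s.Q)) * A) = 0 := by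
      simp only [mul_assoc, mz hA4, hA3, zero_mul, mul_zero, smul_zero, sub_zero]
    rw [hargs] at u1
    rw [hargs0, s.phi0] at u3
    have u12 := u1.symm.trans u2
    have v1 := congrArg (fun y => s.Q * (y * s.Q)) u12
    have v3 := congrArg (fun y => s.Q * (y * s.Q)) u3.symm
    simp only [mul_sub, sub_mul, mul_add, add_mul, mul_smul_comm, smul_mul_assoc, mul_assoc,
      mz s.hPP, mz s.hPQ, mz s.hQP, mz s.hQQ, s.hPP, s.hPQ, s.hQP, s.hQQ,
      mz hA1, mz hA2, mz hA3, mz hA4, mz hB1, mz hB2, mz hB3, mz hB4,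
      hA1, hA2, hA3, hA4, hB1, hB2, hB3, hB4,
      mul_neg, neg_mul, smul_neg, neg_zero, neg_neg, zero_mul, mul_zero, smul_zero, sub_zero, zero_sub, add_zero, zero_add] at v1 v3
    have goal' : (s.Q * (s.Φ (A + B) * s.P) - s.Q * (s.Φ A * s.P) - s.Q * (s.Φ B * s.P))
        * (T * s.Q)
        = s.Q * (s.Φ (A + B) * (s.P * (T * s.Q))) - s.Q * (s.Φ A * (s.P * (T * s.Q)))
          - s.Q * (s.Φ B * (s.P * (T * s.Q))) := by
      simp only [sub_mul, mul_assoc]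
    rw [goal']
    linear_combination (norm := module) v1 - v3
  -- Step (c): the (1,2) corner of the defect vanishes
  have hPDQ : s.P * (s.Φ (A + B) * s.Q) - s.P * (s.Φ A * s.Q) - s.P * (s.Φ B * s.Q) = 0 := by
    apply s.annRP
    intro T hT
    have hmX : s.Mem (s.Q * (T * s.P)) := s.memMul s.hQm (s.memMul hT s.hPm)
    have u1 := s.hlie (A + B) hmS (s.Q * (T * s.P)) hmX
    have u2 := s.hlie A hmA (s.Q * (T * s.P)) hmX
    have u3 := s.hlie B hmB (s.Q * (T * s.P)) hmX
    have hargs : (A + B) * (s.Q * (T * s.P)) - s.ξ • ((s.Q * (T * s.P)) * (A + B))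
        = A * (s.Q * (T * s.P)) - s.ξ • ((s.Q * (T * s.P)) * A) := by
      simp only [add_mul, mul_add, mul_assoc, mz hB4, hB3, hA2, hA1,
        zero_mul, mul_zero, smul_zero, sub_zero, zero_add, add_zero]
    have hargs0 : B * (s.Q * (T * s.P)) - s.ξ • ((s.Q * (T * s.P)) * B) = 0 := by
      simp only [mul_assoc, mz hB4, hB3, zero_mul, mul_zero, smul_zero, sub_zero]
    rw [hargs] at u1
    rw [hargs0, s.phi0] at u3
    have u12 := u1.symm.trans u2
    have v1 := congrArg (fun y => s.P * (y * s.P)) u12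
    have v3 := congrArg (fun y => s.P * (y * s.P)) u3.symm
    simp only [mul_sub, sub_mul, mul_add, add_mul, mul_smul_comm, smul_mul_assoc, mul_assoc,
      mz s.hPP, mz s.hPQ, mz s.hQP, mz s.hQQ, s.hPP, s.hPQ, s.hQP, s.hQQ,
      mz hA1, mz hA2, mz hA3, mz hA4, mz hB1, mz hB2, mz hB3, mz hB4,
      hA1, hA2, hA3, hA4, hB1, hB2, hB3, hB4,
      mul_neg, neg_mul, smul_neg, neg_zero, neg_neg, zero_mul, mul_zero, smul_zero,
      sub_zero, zero_sub, add_zero, zero_add] at v1 v3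
    have goal' : (s.P * (s.Φ (A + B) * s.Q) - s.P * (s.Φ A * s.Q) - s.P * (s.Φ B * s.Q))
        * (T * s.P)
        = s.P * (s.Φ (A + B) * (s.Q * (T * s.P))) - s.P * (s.Φ A * (s.Q * (T * s.P)))
          - s.P * (s.Φ B * (s.Q * (T * s.P))) := by
      simp only [sub_mul, mul_assoc]
    rw [goal']
    linear_combination (norm := module) v1 - v3
  -- Assemble
  have hA5 : s.P * (s.Φ A * s.P) = 0 := by have := (s.S12 hmA hA).1; rwa [mul_assoc] at this
  have hA6 : s.Q * (s.Φ A * s.Q) = 0 := by have := (s.S12 hmA hA).2; rwa [mul_assoc] at this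
  have hB5 : s.P * (s.Φ B * s.P) = 0 := by have := (s.S21 hmB hB).1; rwa [mul_assoc] at this
  have hB6 : s.Q * (s.Φ B * s.Q) = 0 := by have := (s.S21 hmB hB).2; rwa [mul_assoc] at this
  have expand : s.Φ (A + B) - s.Φ A - s.Φ B =
      (s.P * (s.Φ (A + B) * s.P) - s.P * (s.Φ A * s.P) - s.P * (s.Φ B * s.P))
      + (s.P * (s.Φ (A + B) * s.Q) - s.P * (s.Φ A * s.Q) - s.P * (s.Φ B * s.Q))
      + (s.Q * (s.Φ (A + B) * s.P) - s.Q * (s.Φ A * s.P) - s.Q * (s.Φ B * s.P))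
      + (s.Q * (s.Φ (A + B) * s.Q) - s.Q * (s.Φ A * s.Q) - s.Q * (s.Φ B * s.Q)) := by
    have h1 : s.Φ (A + B) - s.Φ A - s.Φ B
        = (s.P + s.Q) * ((s.Φ (A + B) - s.Φ A - s.Φ B) * (s.P + s.Q)) := by
      rw [s.hPQ1, mul_one, one_mul]
    rw [h1]
    simp only [mul_sub, sub_mul, mul_add, add_mul, mul_assoc]
    abel
  have hzero : s.Φ (A + B) - s.Φ A - s.Φ B = 0 := by
    rw [expand, hQDP, hPDQ]
    rw [hFPP, hA5, hB5, hFQQ, hA6, hB6]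
    simp
  rw [sub_sub, sub_eq_zero] at hzero
  exact hzero

/-- Additivity on `M₁₁ + M₂₁`. -/
lemma ClaimIV {A B : R} (hmA : s.Mem A) (hA : s.P * A * s.P = A)
    (hmB : s.Mem B) (hB : s.Q * B * s.P = B) :
    s.Φ (A + B) = s.Φ A + s.Φ B := by
  obtain ⟨hA1, hA2, hA3, hA4⟩ := s.m11 hA
  obtain ⟨hB1, hB2, hB3, hB4⟩ := s.m21 hB
  obtain ⟨fA1, fA2, fA3, fA4⟩ := s.m11 (s.S11 hmA hA)
  have hB5 : s.P * (s.Φ B * s.P) = 0 := by have := (s.S21 hmB hB).1; rwa [mul_assoc] at this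
  have hB6 : s.Q * (s.Φ B * s.Q) = 0 := by have := (s.S21 hmB hB).2; rwa [mul_assoc] at this
  have hmS : s.Mem (A + B) := s.memAdd hmA hmB
  -- Step (a): three corners of the defect vanish
  have e1 := s.hlie s.Q s.hQm (A + B) hmS
  have e2 := s.hlie s.Q s.hQm B hmB
  have e3 := s.hlie s.Q s.hQm A hmA
  simp only [mul_add, add_mul, hA3, hA4, hB1, hB4, zero_add, add_zero,
    s.hQ0, zero_mul, mul_zero, smul_zero, sub_zero, zero_sub, zero_add, add_zero, s.phi0] at e1 e2 e3
  -- e1 : Φ B = Q * Φ(A+B) - ξ • (Φ(A+B) * Q)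
  -- e2 : Φ B = Q * Φ B - ξ • (Φ B * Q)
  -- e3 : 0 = Q * Φ A - ξ • (Φ A * Q)
  have hQrel : s.Q * (s.Φ (A + B) - s.Φ A - s.Φ B)
      - s.ξ • ((s.Φ (A + B) - s.Φ A - s.Φ B) * s.Q) = 0 := by
    simp only [mul_sub, sub_mul, smul_sub]
    linear_combination (norm := module) e2 + e3 - e1
  obtain ⟨c12, c21, c22⟩ := s.corners_of_Qrel hQrel
  have hFQ : s.Q * (s.Φ (A + B) * s.Q) = 0 := by
    have := c22
    simp only [mul_sub, sub_mul, fA4, hB6, mul_zero, sub_zero] at this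
    simpa only [mul_sub, hB6, sub_zero] using this
  -- Step (b): the (1,1) corner of the defect vanishes
  have h11 : s.P * ((s.Φ (A + B) - s.Φ A - s.Φ B) * s.P) = 0 := by
    apply s.annLQ
    intro T hT
    have hmX : s.Mem (s.Q * (T * s.P)) := s.memMul s.hQm (s.memMul hT s.hPm)
    have u1 := s.hlie (A + B) hmS (s.Q * (T * s.P)) hmX
    have u2 := s.hlie A hmA (s.Q * (T * s.P)) hmX
    have u3 := s.hlie B hmB (s.Q * (T * s.P)) hmX
    have hargs : (A + B) * (s.Q * (T * s.P)) - s.ξ • ((s.Q * (T * s.P)) * (A + B))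
        = A * (s.Q * (T * s.P)) - s.ξ • ((s.Q * (T * s.P)) * A) := by
      simp only [add_mul, mul_add, mul_assoc, mz hA4, mz hB4, hB3, hA2, hB2,
        zero_mul, mul_zero, smul_zero, sub_zero, zero_add, add_zero]
    have hargs0 : B * (s.Q * (T * s.P)) - s.ξ • ((s.Q * (T * s.P)) * B) = 0 := by
      simp only [mul_assoc, mz hB4, hB3, zero_mul, mul_zero, smul_zero, sub_zero]
    rw [hargs] at u1
    rw [hargs0, s.phi0] at u3
    have u12 := u1.symm.trans u2
    have v1 := congrArg (fun y => s.Q * (y * s.P)) u12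
    have v3 := congrArg (fun y => s.Q * (y * s.P)) u3.symm
    simp only [mul_sub, sub_mul, mul_add, add_mul, mul_smul_comm, smul_mul_assoc, mul_assoc,
      mz s.hPP, mz s.hPQ, mz s.hQP, mz s.hQQ, s.hPP, s.hPQ, s.hQP, s.hQQ,
      mz hA1, mz hA2, mz hA3, mz hA4, mz hB1, mz hB2, mz hB3, mz hB4,
      hA1, hA2, hA3, hA4, hB1, hB2, hB3, hB4,
      mz fA1, mz fA2, mz fA3, mz fA4, fA1, fA2, fA3, fA4,
      mzz hFQ, mzz hB6, mzz hB5,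
      mul_neg, neg_mul, smul_neg, neg_zero, neg_neg, zero_mul, mul_zero, smul_zero,
      sub_zero, zero_sub, add_zero, zero_add] at v1 v3
    have key : s.ξ • (s.Q * (T * (s.P * ((s.Φ (A + B) - s.Φ A - s.Φ B) * s.P)))) = 0 := by
      simp only [mul_sub, sub_mul, mul_add, add_mul, mul_smul_comm, smul_mul_assoc, mul_assoc,
        mz s.hPP, mz s.hPQ, mz s.hQP, mz s.hQQ, s.hPP, s.hPQ, s.hQP, s.hQQ,
        mz hA1, mz hA2, mz hA3, mz hA4, mz hB1, mz hB2, mz hB3, mz hB4,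
        hA1, hA2, hA3, hA4, hB1, hB2, hB3, hB4,
        mz fA1, mz fA2, mz fA3, mz fA4, fA1, fA2, fA3, fA4,
        mzz hFQ, mzz hB6, mzz hB5,
        mul_neg, neg_mul, smul_neg, neg_zero, neg_neg, zero_mul, mul_zero, smul_zero,
        sub_zero, zero_sub, add_zero, zero_add, smul_sub, smul_add]
      linear_combination (norm := module) v3 - v1
    exact (smul_eq_zero.mp key).resolve_left s.hξ0
  have hzero : s.Φ (A + B) - s.Φ A - s.Φ B = 0 := s.recompose h11 c12 c21 c22
  rw [sub_sub, sub_eq_zero] at hzero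
  exact hzero

/-- Additivity on `M₁₂ + M₂₂`. -/
lemma ClaimV {A B : R} (hmA : s.Mem A) (hA : s.P * A * s.Q = A)
    (hmB : s.Mem B) (hB : s.Q * B * s.Q = B) :
    s.Φ (A + B) = s.Φ A + s.Φ B := by
  obtain ⟨hA1, hA2, hA3, hA4⟩ := s.m12 hA
  obtain ⟨hB1, hB2, hB3, hB4⟩ := s.m22 hB
  obtain ⟨fB1, fB2, fB3, fB4⟩ := s.m22 (s.S22 hmB hB)
  have hA5 : s.P * (s.Φ A * s.P) = 0 := by have := (s.S12 hmA hA).1; rwa [mul_assoc] at this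
  have hA6 : s.Q * (s.Φ A * s.Q) = 0 := by have := (s.S12 hmA hA).2; rwa [mul_assoc] at this
  have hmS : s.Mem (A + B) := s.memAdd hmA hmB
  -- Step (a): three corners of the defect vanish
  have e1 := s.hlie s.P s.hPm (A + B) hmS
  have e2 := s.hlie s.P s.hPm A hmA
  have e3 := s.hlie s.P s.hPm B hmB
  simp only [mul_add, add_mul, hA1, hA4, hB3, hB4, zero_add, add_zero,
    s.hP0, zero_mul, mul_zero, smul_zero, sub_zero, zero_sub, zero_add, add_zero, s.phi0] at e1 e2 e3
  -- e1 : Φ A = P * Φ(A+B) - ξ • (Φ(A+B) * P)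
  -- e2 : Φ A = P * Φ A - ξ • (Φ A * P)
  -- e3 : 0 = P * Φ B - ξ • (Φ B * P)
  have hPrel : s.P * (s.Φ (A + B) - s.Φ A - s.Φ B)
      - s.ξ • ((s.Φ (A + B) - s.Φ A - s.Φ B) * s.P) = 0 := by
    simp only [mul_sub, sub_mul, smul_sub]
    linear_combination (norm := module) e2 + e3 - e1
  obtain ⟨c11, c12, c21⟩ := s.corners_of_Prel hPrel
  have hFP : s.P * (s.Φ (A + B) * s.P) = 0 := by
    have := c11
    simp only [mul_sub, sub_mul, fB4, hA5, mul_zero, sub_zero] at this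
    simpa only [mul_sub, hA5, sub_zero] using this
  -- Step (b): the (2,2) corner of the defect vanishes
  have h22 : s.Q * ((s.Φ (A + B) - s.Φ A - s.Φ B) * s.Q) = 0 := by
    apply s.annLP
    intro T hT
    have hmX : s.Mem (s.P * (T * s.Q)) := s.memMul s.hPm (s.memMul hT s.hQm)
    have u1 := s.hlie (A + B) hmS (s.P * (T * s.Q)) hmX
    have u2 := s.hlie B hmB (s.P * (T * s.Q)) hmX
    have u3 := s.hlie A hmA (s.P * (T * s.Q)) hmX
    have hargs : (A + B) * (s.P * (T * s.Q)) - s.ξ • ((s.P * (T * s.Q)) * (A + B))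
        = B * (s.P * (T * s.Q)) - s.ξ • ((s.P * (T * s.Q)) * B) := by
      simp only [add_mul, mul_add, mul_assoc, mz hA4, mz hB4, hA3, hB1, hB2,
        zero_mul, mul_zero, smul_zero, sub_zero, zero_add, add_zero]
    have hargs0 : A * (s.P * (T * s.Q)) - s.ξ • ((s.P * (T * s.Q)) * A) = 0 := by
      simp only [mul_assoc, mz hA4, hA3, zero_mul, mul_zero, smul_zero, sub_zero]
    rw [hargs] at u1
    rw [hargs0, s.phi0] at u3
    have u12 := u1.symm.trans u2
    have v1 := congrArg (fun y => s.P * (y * s.Q)) u12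
    have v3 := congrArg (fun y => s.P * (y * s.Q)) u3.symm
    simp only [mul_sub, sub_mul, mul_add, add_mul, mul_smul_comm, smul_mul_assoc, mul_assoc,
      mz s.hPP, mz s.hPQ, mz s.hQP, mz s.hQQ, s.hPP, s.hPQ, s.hQP, s.hQQ,
      mz hA1, mz hA2, mz hA3, mz hA4, mz hB1, mz hB2, mz hB3, mz hB4,
      hA1, hA2, hA3, hA4, hB1, hB2, hB3, hB4,
      mz fB1, mz fB2, mz fB3, mz fB4, fB1, fB2, fB3, fB4,
      mzz hFP, mzz hA5, mzz hA6,
      mul_neg, neg_mul, smul_neg, neg_zero, neg_neg, zero_mul, mul_zero, smul_zero,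
      sub_zero, zero_sub, add_zero, zero_add] at v1 v3
    have key : s.ξ • (s.P * (T * (s.Q * ((s.Φ (A + B) - s.Φ A - s.Φ B) * s.Q)))) = 0 := by
      simp only [mul_sub, sub_mul, mul_add, add_mul, mul_smul_comm, smul_mul_assoc, mul_assoc,
        mz s.hPP, mz s.hPQ, mz s.hQP, mz s.hQQ, s.hPP, s.hPQ, s.hQP, s.hQQ,
        mz hA1, mz hA2, mz hA3, mz hA4, mz hB1, mz hB2, mz hB3, mz hB4,
        hA1, hA2, hA3, hA4, hB1, hB2, hB3, hB4,
        mz fB1, mz fB2, mz fB3, mz fB4, fB1, fB2, fB3, fB4,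
        mzz hFP, mzz hA5, mzz hA6,
        mul_neg, neg_mul, smul_neg, neg_zero, neg_neg, zero_mul, mul_zero, smul_zero,
        sub_zero, zero_sub, add_zero, zero_add, smul_sub, smul_add]
      linear_combination (norm := module) v3 - v1
    exact (smul_eq_zero.mp key).resolve_left s.hξ0
  have hzero : s.Φ (A + B) - s.Φ A - s.Φ B = 0 := s.recompose c11 c12 c21 h22
  rw [sub_sub, sub_eq_zero] at hzero
  exact hzero

/-- Additivity on `M₁₁ + M₁₂ + M₂₁`. -/
lemma ClaimI {A B C : R} (hmA : s.Mem A) (hA : s.P * A * s.P = A)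
    (hmB : s.Mem B) (hB : s.P * B * s.Q = B)
    (hmC : s.Mem C) (hC : s.Q * C * s.P = C) :
    s.Φ (A + B + C) = s.Φ A + s.Φ B + s.Φ C := by
  obtain ⟨a1, a2, a3, a4⟩ := s.m11 hA
  obtain ⟨b1, b2, b3, b4⟩ := s.m12 hB
  obtain ⟨c1, c2, c3, c4⟩ := s.m21 hC
  obtain ⟨fA1, fA2, fA3, fA4⟩ := s.m11 (s.S11 hmA hA)
  have hB5 : s.P * (s.Φ B * s.P) = 0 := by have := (s.S12 hmB hB).1; rwa [mul_assoc] at this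
  have hB6 : s.Q * (s.Φ B * s.Q) = 0 := by have := (s.S12 hmB hB).2; rwa [mul_assoc] at this
  have hC5 : s.P * (s.Φ C * s.P) = 0 := by have := (s.S21 hmC hC).1; rwa [mul_assoc] at this
  have hC6 : s.Q * (s.Φ C * s.Q) = 0 := by have := (s.S21 hmC hC).2; rwa [mul_assoc] at this
  have hmS : s.Mem (A + B + C) := s.memAdd (s.memAdd hmA hmB) hmC
  have hmB' : s.Mem (-(s.ξ • B)) := by
    rw [← neg_smul]; exact s.memSmul _ hmB
  have hB' : s.P * (-(s.ξ • B)) * s.Q = -(s.ξ • B) := by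
    simp only [mul_neg, neg_mul, mul_smul_comm, smul_mul_assoc, hB]
  -- Step (a)
  have e1 := s.hlie s.Q s.hQm (A + B + C) hmS
  have e2 := s.hlie s.Q s.hQm B hmB
  have e3 := s.hlie s.Q s.hQm C hmC
  have e4 := s.hlie s.Q s.hQm A hmA
  simp only [mul_add, add_mul, a3, a4, b3, b2, c1, c4, zero_add, add_zero,
    s.hQ0, zero_mul, mul_zero, smul_zero, sub_zero, zero_sub, s.phi0] at e1 e2 e3 e4
  -- e1 : Φ (C - ξ•B) = ..., e2 : Φ (-(ξ•B)) = ..., e3 : Φ C = ..., e4 : 0 = ...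
  have harg : C - s.ξ • B = -(s.ξ • B) + C := by abel
  rw [harg, s.ClaimIII hmB' hB' hmC hC] at e1
  have hQrel : s.Q * (s.Φ (A + B + C) - s.Φ A - s.Φ B - s.Φ C)
      - s.ξ • ((s.Φ (A + B + C) - s.Φ A - s.Φ B - s.Φ C) * s.Q) = 0 := by
    simp only [mul_sub, sub_mul, smul_sub, mul_add, add_mul, smul_add]
    linear_combination (norm := module) e2 + e3 + e4 - e1
  obtain ⟨c12, c21, c22⟩ := s.corners_of_Qrel hQrel
  have hFQ : s.Q * (s.Φ (A + B + C) * s.Q) = 0 := by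
    have h' := c22
    simp only [mul_sub, sub_mul, fA4, mul_zero, sub_zero, hB6, hC6] at h'
    simpa only [mul_sub, hB6, hC6, sub_zero] using h'
  -- Step (b): the (1,1) corner of the defect vanishes
  have h11 : s.P * ((s.Φ (A + B + C) - s.Φ A - s.Φ B - s.Φ C) * s.P) = 0 := by
    apply s.annRQ
    intro T hT
    have hmX : s.Mem (s.P * (T * s.Q)) := s.memMul s.hPm (s.memMul hT s.hQm)
    have u1 := s.hlie (A + B + C) hmS (s.P * (T * s.Q)) hmX
    have u2 := s.hlie (A + C) (s.memAdd hmA hmC) (s.P * (T * s.Q)) hmX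
    have u3 := s.hlie B hmB (s.P * (T * s.Q)) hmX
    have hargs : (A + B + C) * (s.P * (T * s.Q)) - s.ξ • ((s.P * (T * s.Q)) * (A + B + C))
        = (A + C) * (s.P * (T * s.Q)) - s.ξ • ((s.P * (T * s.Q)) * (A + C)) := by
      simp only [add_mul, mul_add, mul_assoc, mz b4, b3, zero_mul, mul_zero, smul_zero,
        sub_zero, zero_add, add_zero]
    have hargs0 : B * (s.P * (T * s.Q)) - s.ξ • ((s.P * (T * s.Q)) * B) = 0 := by
      simp only [mul_assoc, mz b4, b3, zero_mul, mul_zero, smul_zero, sub_zero]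
    rw [hargs] at u1
    rw [hargs0, s.phi0] at u3
    rw [s.ClaimIV hmA hA hmC hC] at u2
    have u12 := u1.symm.trans u2
    have v1 := congrArg (fun y => s.P * (y * s.Q)) u12
    have v3 := congrArg (fun y => s.P * (y * s.Q)) u3.symm
    simp only [mul_sub, sub_mul, mul_add, add_mul, mul_smul_comm, smul_mul_assoc, mul_assoc,
      mz s.hPP, mz s.hPQ, mz s.hQP, mz s.hQQ, s.hPP, s.hPQ, s.hQP, s.hQQ,
      mz a1, mz a2, mz a3, mz a4, mz b1, mz b2, mz b3, mz b4, mz c1, mz c2, mz c3, mz c4,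
      a1, a2, a3, a4, b1, b2, b3, b4, c1, c2, c3, c4,
      mz fA1, mz fA2, mz fA3, mz fA4, fA1, fA2, fA3, fA4,
      hFQ, mzz hFQ, hB6, mzz hB6, hC6, mzz hC6, hB5, mzz hB5, hC5, mzz hC5,
      mul_neg, neg_mul, smul_neg, neg_zero, neg_neg, zero_mul, mul_zero, smul_zero,
      sub_zero, zero_sub, add_zero, zero_add] at v1 v3
    simp only [mul_sub, sub_mul, mul_add, add_mul, mul_smul_comm, smul_mul_assoc, mul_assoc,
      mz s.hPP, mz s.hPQ, mz s.hQP, mz s.hQQ, s.hPP, s.hPQ, s.hQP, s.hQQ,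
      mz a1, mz a2, mz a3, mz a4, mz b1, mz b2, mz b3, mz b4, mz c1, mz c2, mz c3, mz c4,
      a1, a2, a3, a4, b1, b2, b3, b4, c1, c2, c3, c4,
      mz fA1, mz fA2, mz fA3, mz fA4, fA1, fA2, fA3, fA4,
      hFQ, mzz hFQ, hB6, mzz hB6, hC6, mzz hC6, hB5, mzz hB5, hC5, mzz hC5,
      mul_neg, neg_mul, smul_neg, neg_zero, neg_neg, zero_mul, mul_zero, smul_zero,
      sub_zero, zero_sub, add_zero, zero_add]
    linear_combination (norm := module) v1 - v3
  have hzero : s.Φ (A + B + C) - s.Φ A - s.Φ B - s.Φ C = 0 := s.recompose h11 c12 c21 c22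
  rw [sub_sub, sub_sub, sub_eq_zero] at hzero
  rw [hzero]; abel

/-- Additivity on `M₁₂ + M₂₁ + M₂₂`. -/
lemma ClaimII {A B C : R} (hmA : s.Mem A) (hA : s.P * A * s.Q = A)
    (hmB : s.Mem B) (hB : s.Q * B * s.P = B)
    (hmC : s.Mem C) (hC : s.Q * C * s.Q = C) :
    s.Φ (A + B + C) = s.Φ A + s.Φ B + s.Φ C := by
  obtain ⟨a1, a2, a3, a4⟩ := s.m12 hA
  obtain ⟨b1, b2, b3, b4⟩ := s.m21 hB
  obtain ⟨c1, c2, c3, c4⟩ := s.m22 hC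
  obtain ⟨fC1, fC2, fC3, fC4⟩ := s.m22 (s.S22 hmC hC)
  have hA5 : s.P * (s.Φ A * s.P) = 0 := by have := (s.S12 hmA hA).1; rwa [mul_assoc] at this
  have hA6 : s.Q * (s.Φ A * s.Q) = 0 := by have := (s.S12 hmA hA).2; rwa [mul_assoc] at this
  have hB5 : s.P * (s.Φ B * s.P) = 0 := by have := (s.S21 hmB hB).1; rwa [mul_assoc] at this
  have hB6 : s.Q * (s.Φ B * s.Q) = 0 := by have := (s.S21 hmB hB).2; rwa [mul_assoc] at this
  have hmS : s.Mem (A + B + C) := s.memAdd (s.memAdd hmA hmB) hmC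
  have hmB' : s.Mem (-(s.ξ • B)) := by
    rw [← neg_smul]; exact s.memSmul _ hmB
  have hB' : s.Q * (-(s.ξ • B)) * s.P = -(s.ξ • B) := by
    simp only [mul_neg, neg_mul, mul_smul_comm, smul_mul_assoc, hB]
  -- Step (a)
  have e1 := s.hlie s.P s.hPm (A + B + C) hmS
  have e2 := s.hlie s.P s.hPm A hmA
  have e3 := s.hlie s.P s.hPm B hmB
  have e4 := s.hlie s.P s.hPm C hmC
  simp only [mul_add, add_mul, a1, a4, b2, b3, c3, c4, zero_add, add_zero,
    s.hP0, zero_mul, mul_zero, smul_zero, sub_zero, zero_sub, s.phi0] at e1 e2 e3 e4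
  have harg : A - s.ξ • B = A + -(s.ξ • B) := by abel
  rw [harg, s.ClaimIII hmA hA hmB' hB'] at e1
  have hPrel : s.P * (s.Φ (A + B + C) - s.Φ A - s.Φ B - s.Φ C)
      - s.ξ • ((s.Φ (A + B + C) - s.Φ A - s.Φ B - s.Φ C) * s.P) = 0 := by
    simp only [mul_sub, sub_mul, smul_sub, mul_add, add_mul, smul_add]
    linear_combination (norm := module) e2 + e3 + e4 - e1
  obtain ⟨c11, c12, c21⟩ := s.corners_of_Prel hPrel
  have hFP : s.P * (s.Φ (A + B + C) * s.P) = 0 := by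
    have h' := c11
    simp only [mul_sub, sub_mul, fC4, mul_zero, sub_zero, hA5, hB5] at h'
    simpa only [mul_sub, hA5, hB5, sub_zero] using h'
  -- Step (b): the (2,2) corner of the defect vanishes
  have h22 : s.Q * ((s.Φ (A + B + C) - s.Φ A - s.Φ B - s.Φ C) * s.Q) = 0 := by
    apply s.annRP
    intro T hT
    have hmX : s.Mem (s.Q * (T * s.P)) := s.memMul s.hQm (s.memMul hT s.hPm)
    have u1 := s.hlie (A + B + C) hmS (s.Q * (T * s.P)) hmX
    have u2 := s.hlie (A + C) (s.memAdd hmA hmC) (s.Q * (T * s.P)) hmX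
    have u3 := s.hlie B hmB (s.Q * (T * s.P)) hmX
    have hargs : (A + B + C) * (s.Q * (T * s.P)) - s.ξ • ((s.Q * (T * s.P)) * (A + B + C))
        = (A + C) * (s.Q * (T * s.P)) - s.ξ • ((s.Q * (T * s.P)) * (A + C)) := by
      simp only [add_mul, mul_add, mul_assoc, mz b4, b3, zero_mul, mul_zero, smul_zero,
        sub_zero, zero_add, add_zero]
    have hargs0 : B * (s.Q * (T * s.P)) - s.ξ • ((s.Q * (T * s.P)) * B) = 0 := by
      simp only [mul_assoc, mz b4, b3, zero_mul, mul_zero, smul_zero, sub_zero]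
    rw [hargs] at u1
    rw [hargs0, s.phi0] at u3
    rw [s.ClaimV hmA hA hmC hC] at u2
    have u12 := u1.symm.trans u2
    have v1 := congrArg (fun y => s.Q * (y * s.P)) u12
    have v3 := congrArg (fun y => s.Q * (y * s.P)) u3.symm
    simp only [mul_sub, sub_mul, mul_add, add_mul, mul_smul_comm, smul_mul_assoc, mul_assoc,
      mz s.hPP, mz s.hPQ, mz s.hQP, mz s.hQQ, s.hPP, s.hPQ, s.hQP, s.hQQ,
      mz a1, mz a2, mz a3, mz a4, mz b1, mz b2, mz b3, mz b4, mz c1, mz c2, mz c3, mz c4,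
      a1, a2, a3, a4, b1, b2, b3, b4, c1, c2, c3, c4,
      mz fC1, mz fC2, mz fC3, mz fC4, fC1, fC2, fC3, fC4,
      hFP, mzz hFP, hA6, mzz hA6, hB6, mzz hB6, hA5, mzz hA5, hB5, mzz hB5,
      mul_neg, neg_mul, smul_neg, neg_zero, neg_neg, zero_mul, mul_zero, smul_zero,
      sub_zero, zero_sub, add_zero, zero_add] at v1 v3
    simp only [mul_sub, sub_mul, mul_add, add_mul, mul_smul_comm, smul_mul_assoc, mul_assoc,
      mz s.hPP, mz s.hPQ, mz s.hQP, mz s.hQQ, s.hPP, s.hPQ, s.hQP, s.hQQ,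
      mz a1, mz a2, mz a3, mz a4, mz b1, mz b2, mz b3, mz b4, mz c1, mz c2, mz c3, mz c4,
      a1, a2, a3, a4, b1, b2, b3, b4, c1, c2, c3, c4,
      mz fC1, mz fC2, mz fC3, mz fC4, fC1, fC2, fC3, fC4,
      hFP, mzz hFP, hA6, mzz hA6, hB6, mzz hB6, hA5, mzz hA5, hB5, mzz hB5,
      mul_neg, neg_mul, smul_neg, neg_zero, neg_neg, zero_mul, mul_zero, smul_zero,
      sub_zero, zero_sub, add_zero, zero_add]
    linear_combination (norm := module) v1 - v3
  have hzero : s.Φ (A + B + C) - s.Φ A - s.Φ B - s.Φ C = 0 := s.recompose c11 c12 c21 h22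
  rw [sub_sub, sub_sub, sub_eq_zero] at hzero
  rw [hzero]; abel

/-- Ring-level main theorem: Peirce additivity. -/
theorem main {T11 T12 T21 T22 : R}
    (hm11 : s.Mem T11) (h11 : s.P * T11 * s.P = T11)
    (hm12 : s.Mem T12) (h12 : s.P * T12 * s.Q = T12)
    (hm21 : s.Mem T21) (h21 : s.Q * T21 * s.P = T21)
    (hm22 : s.Mem T22) (h22 : s.Q * T22 * s.Q = T22) :
    s.Φ (T11 + T12 + T21 + T22) = s.Φ T11 + s.Φ T12 + s.Φ T21 + s.Φ T22 := by
  obtain ⟨a1, a2, a3, a4⟩ := s.m11 h11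
  obtain ⟨b1, b2, b3, b4⟩ := s.m12 h12
  obtain ⟨c1, c2, c3, c4⟩ := s.m21 h21
  obtain ⟨d1, d2, d3, d4⟩ := s.m22 h22
  have hmS : s.Mem (T11 + T12 + T21 + T22) :=
    s.memAdd (s.memAdd (s.memAdd hm11 hm12) hm21) hm22
  -- scaled pieces
  have hmA1 : s.Mem (((1 : ℂ) - s.ξ) • T11) := s.memSmul _ hm11
  have hA1' : s.P * (((1 : ℂ) - s.ξ) • T11) * s.P = ((1 : ℂ) - s.ξ) • T11 := by
    simp only [mul_smul_comm, smul_mul_assoc, h11]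
  have hmC1 : s.Mem (-(s.ξ • T21)) := by rw [← neg_smul]; exact s.memSmul _ hm21
  have hC1' : s.Q * (-(s.ξ • T21)) * s.P = -(s.ξ • T21) := by
    simp only [mul_neg, neg_mul, mul_smul_comm, smul_mul_assoc, h21]
  have hmA2 : s.Mem (-(s.ξ • T12)) := by rw [← neg_smul]; exact s.memSmul _ hm12
  have hA2' : s.P * (-(s.ξ • T12)) * s.Q = -(s.ξ • T12) := by
    simp only [mul_neg, neg_mul, mul_smul_comm, smul_mul_assoc, h12]
  have hmC2 : s.Mem (((1 : ℂ) - s.ξ) • T22) := s.memSmul _ hm22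
  have hC2' : s.Q * (((1 : ℂ) - s.ξ) • T22) * s.Q = ((1 : ℂ) - s.ξ) • T22 := by
    simp only [mul_smul_comm, smul_mul_assoc, h22]
  -- P-relation
  have e1 := s.hlie s.P s.hPm (T11 + T12 + T21 + T22) hmS
  have e2 := s.hlie s.P s.hPm T11 hm11
  have e3 := s.hlie s.P s.hPm T12 hm12
  have e4 := s.hlie s.P s.hPm T21 hm21
  have e5 := s.hlie s.P s.hPm T22 hm22
  simp only [mul_add, add_mul, a1, a2, b1, b4, c3, c2, d3, d4, zero_add, add_zero,
    s.hP0, zero_mul, mul_zero, smul_zero, sub_zero, zero_sub, s.phi0] at e1 e2 e3 e4 e5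
  have hargP : T11 + T12 - s.ξ • (T11 + T21)
      = ((1 : ℂ) - s.ξ) • T11 + T12 + -(s.ξ • T21) := by
    simp only [sub_smul, one_smul, smul_add]; abel
  rw [hargP, s.ClaimI hmA1 hA1' hm12 h12 hmC1 hC1'] at e1
  have hargP2 : T11 - s.ξ • T11 = ((1 : ℂ) - s.ξ) • T11 := by
    rw [sub_smul, one_smul]
  rw [hargP2] at e2
  have hPrel : s.P * (s.Φ (T11 + T12 + T21 + T22) - s.Φ T11 - s.Φ T12 - s.Φ T21 - s.Φ T22)
      - s.ξ • ((s.Φ (T11 + T12 + T21 + T22) - s.Φ T11 - s.Φ T12 - s.Φ T21 - s.Φ T22) * s.P)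
      = 0 := by
    simp only [mul_sub, sub_mul, smul_sub, mul_add, add_mul, smul_add]
    linear_combination (norm := module) e2 + e3 + e4 + e5 - e1
  -- Q-relation
  have f1 := s.hlie s.Q s.hQm (T11 + T12 + T21 + T22) hmS
  have f2 := s.hlie s.Q s.hQm T11 hm11
  have f3 := s.hlie s.Q s.hQm T12 hm12
  have f4 := s.hlie s.Q s.hQm T21 hm21
  have f5 := s.hlie s.Q s.hQm T22 hm22
  simp only [mul_add, add_mul, a3, a4, b3, b2, c1, c4, d1, d2, zero_add, add_zero,
    s.hQ0, zero_mul, mul_zero, smul_zero, sub_zero, zero_sub, s.phi0] at f1 f2 f3 f4 f5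
  have hargQ : T21 + T22 - s.ξ • (T12 + T22)
      = -(s.ξ • T12) + T21 + ((1 : ℂ) - s.ξ) • T22 := by
    simp only [sub_smul, one_smul, smul_add]; abel
  rw [hargQ, s.ClaimII hmA2 hA2' hm21 h21 hmC2 hC2'] at f1
  have hargQ2 : T22 - s.ξ • T22 = ((1 : ℂ) - s.ξ) • T22 := by
    rw [sub_smul, one_smul]
  rw [hargQ2] at f5
  have hQrel : s.Q * (s.Φ (T11 + T12 + T21 + T22) - s.Φ T11 - s.Φ T12 - s.Φ T21 - s.Φ T22)
      - s.ξ • ((s.Φ (T11 + T12 + T21 + T22) - s.Φ T11 - s.Φ T12 - s.Φ T21 - s.Φ T22) * s.Q)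
      = 0 := by
    simp only [mul_sub, sub_mul, smul_sub, mul_add, add_mul, smul_add]
    linear_combination (norm := module) f2 + f3 + f4 + f5 - f1
  -- combine
  have hsum : (s.P + s.Q) * (s.Φ (T11 + T12 + T21 + T22)
        - s.Φ T11 - s.Φ T12 - s.Φ T21 - s.Φ T22)
      - s.ξ • ((s.Φ (T11 + T12 + T21 + T22)
        - s.Φ T11 - s.Φ T12 - s.Φ T21 - s.Φ T22) * (s.P + s.Q)) = 0 := by
    simp only [add_mul, mul_add, smul_add]
    linear_combination (norm := module) hPrel + hQrel
  rw [s.hPQ1, one_mul, mul_one] at hsum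
  have hz : ((1 : ℂ) - s.ξ) • (s.Φ (T11 + T12 + T21 + T22)
      - s.Φ T11 - s.Φ T12 - s.Φ T21 - s.Φ T22) = 0 := by
    rw [sub_smul, one_smul]; exact hsum
  have hzero := (smul_eq_zero.mp hz).resolve_left s.hξ1'
  rw [sub_sub, sub_sub, sub_sub, sub_eq_zero] at hzero
  rw [hzero]; abel

end XiSetup

end RingLevel


lemma commute_starProj (K : Submodule ℂ H) [CompleteSpace K] (S : H →L[ℂ] H)
    (h1 : ∀ x ∈ K, S x ∈ K) (h2 : ∀ x ∈ K, (ContinuousLinearMap.adjoint S) x ∈ K) :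
    (K.subtypeL ∘L K.orthogonalProjectionOnto) * S = S * (K.subtypeL ∘L K.orthogonalProjectionOnto) := by
  set E := K.subtypeL ∘L K.orthogonalProjectionOnto with hE
  have hEapp : ∀ x, E x = (K.orthogonalProjectionOnto x : H) := fun x => rfl
  have hfix : ∀ y ∈ K, E y = y := by
    intro y hy; rw [hEapp]; exact Submodule.starProjection_eq_self_iff.2 hy
  have hzero : ∀ y ∈ Kᗮ, E y = 0 := by
    intro y hy; rw [hEapp]
    rw [Submodule.orthogonalProjectionOnto_apply_of_mem_orthogonal hy]
    simp
  ext x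
  have hmem : E x ∈ K := by rw [hEapp]; exact (K.orthogonalProjectionOnto x).2
  have hperp : x - E x ∈ Kᗮ := by
    rw [hEapp]; exact Submodule.sub_starProjection_mem_orthogonal (K := K) x
  have hS : S (x - E x) ∈ Kᗮ := by
    rw [Submodule.mem_orthogonal]
    intro u hu
    rw [← ContinuousLinearMap.adjoint_inner_left]
    exact (Submodule.mem_orthogonal K _).1 hperp _ (h2 u hu)
  have : S x = S (E x) + S (x - E x) := by rw [← map_add]; congr 1; abel
  calc (E * S) x = E (S x) := rfl
    _ = E (S (E x)) + E (S (x - E x)) := by rw [this, map_add]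
    _ = S (E x) + 0 := by rw [hfix _ (h1 _ hmem), hzero _ hS]
    _ = (S * E) x := by simp [ContinuousLinearMap.mul_apply]

lemma vn_ann_right (M : VonNeumannAlgebra H) (P' : H →L[ℂ] H) (hP'm : P' ∈ M)
    (hmin : ∀ Z : H →L[ℂ] H, Z ∈ M → (∀ T ∈ M, Z * T = T * Z) → IsSelfAdjoint Z →
      Z * Z = Z → Z * P' = P' → Z = 1)
    (C : H →L[ℂ] H) (hC : ∀ T ∈ M, C * (T * P') = 0) : C = 0 := by
  classical
  set gen : Set H := {y | ∃ T ∈ M, ∃ x : H, (T * P') x = y} with hgendef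
  set K := (Submodule.span ℂ gen).topologicalClosure with hK
  haveI : CompleteSpace K := Submodule.topologicalClosure.completeSpace _
  have hKclosed : IsClosed (K : Set H) := Submodule.isClosed_topologicalClosure _
  set E := K.subtypeL ∘L K.orthogonalProjectionOnto with hEdef
  have hgen : ∀ T ∈ M, ∀ x : H, (T * P') x ∈ K := fun T hT x =>
    Submodule.le_topologicalClosure _ (Submodule.subset_span ⟨T, hT, x, rfl⟩)
  have hfix : ∀ y ∈ K, E y = y := by
    intro y hy
    show (K.subtypeL (K.orthogonalProjectionOnto y)) = y
    exact Submodule.starProjection_eq_self_iff.2 hy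
  -- invariance criterion
  have hinv : ∀ S : H →L[ℂ] H, (∀ T ∈ M, ∀ x, S ((T * P') x) ∈ K) → ∀ y ∈ K, S y ∈ K := by
    intro S hSgen y hy
    have hcl : IsClosed ((K.comap (S : H →ₗ[ℂ] H) : Submodule ℂ H) : Set H) :=
      hKclosed.preimage S.continuous
    have hle : (Submodule.span ℂ gen).topologicalClosure ≤ K.comap (S : H →ₗ[ℂ] H) := by
      apply Submodule.topologicalClosure_minimal _ _ hcl
      rw [Submodule.span_le]
      rintro y ⟨T, hT, x, rfl⟩
      exact hSgen T hT x
    exact hle hy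
  -- E commutes with every element of M
  have hEcomm : ∀ S ∈ M, E * S = S * E := by
    intro S hS
    apply commute_starProj
    · apply hinv
      intro T hT x
      have : S ((T * P') x) = ((S * T) * P') x := by
        simp [ContinuousLinearMap.mul_apply, mul_assoc]
      rw [this]; exact hgen _ (mul_mem hS hT) x
    · apply hinv
      intro T hT x
      have hstar : ContinuousLinearMap.adjoint S = star S :=
        (ContinuousLinearMap.star_eq_adjoint S).symm
      have : (ContinuousLinearMap.adjoint S) ((T * P') x) = ((star S * T) * P') x := by
        rw [hstar]; simp [ContinuousLinearMap.mul_apply, mul_assoc]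
      rw [this]; exact hgen _ (mul_mem (star_mem hS) hT) x
  -- E commutes with every element of the commutant
  have hEcomm' : ∀ S, S ∈ Set.centralizer (M : Set (H →L[ℂ] H)) → E * S = S * E := by
    intro S hS
    have hSstar : star S ∈ Set.centralizer (M : Set (H →L[ℂ] H)) := by
      intro g hg
      have h1 : g * star S = star (S * star g) := by simp
      have h2 : star S * g = star (star g * S) := by simp
      rw [h1, h2, hS (star g) (star_mem hg)]
    apply commute_starProj
    · apply hinv
      intro T hT x
      have h1 : S * (T * P') = (T * P') * S := (hS (T * P') (mul_mem hT hP'm)).symm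
      have : S ((T * P') x) = (T * P') (S x) := by
        have := congrArg (fun (A : H →L[ℂ] H) => A x) h1
        simpa [ContinuousLinearMap.mul_apply] using this
      rw [this]; exact hgen _ hT _
    · apply hinv
      intro T hT x
      have hstar : ContinuousLinearMap.adjoint S = star S :=
        (ContinuousLinearMap.star_eq_adjoint S).symm
      have h1 : star S * (T * P') = (T * P') * star S := (hSstar (T * P') (mul_mem hT hP'm)).symm
      have : (ContinuousLinearMap.adjoint S) ((T * P') x) = (T * P') ((star S) x) := by
        rw [hstar]
        have := congrArg (fun (A : H →L[ℂ] H) => A x) h1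
        simpa [ContinuousLinearMap.mul_apply] using this
      rw [this]; exact hgen _ hT _
  -- E belongs to M (double commutant)
  have hEmem : E ∈ M := by
    have : E ∈ Set.centralizer (Set.centralizer (M : Set (H →L[ℂ] H))) := by
      intro S hS
      exact (hEcomm' S hS).symm
    rwa [M.centralizer_centralizer] at this
  -- E is a self-adjoint idempotent with E * P' = P'
  have hEsa : IsSelfAdjoint E := isSelfAdjoint_starProjection K
  have hEidem : E * E = E := by
    ext x
    exact hfix _ ((K.orthogonalProjectionOnto x).2)
  have hEP : E * P' = P' := by
    ext x
    show E (P' x) = P' x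
    have : P' x ∈ K := by
      have := hgen 1 (one_mem M) x
      simpa using this
    exact hfix _ this
  have hE1 : E = 1 := hmin E hEmem (fun T hT => hEcomm T hT) hEsa hEidem hEP
  -- C vanishes on K = ⊤
  have hker : ∀ y ∈ K, C y = 0 := by
    intro y hy
    have hle : (Submodule.span ℂ gen).topologicalClosure ≤ LinearMap.ker (C : H →ₗ[ℂ] H) := by
      apply Submodule.topologicalClosure_minimal
      · rw [Submodule.span_le]
        rintro y ⟨T, hT, x, rfl⟩
        have := congrArg (fun (A : H →L[ℂ] H) => A x) (hC T hT)
        simpa [ContinuousLinearMap.mul_apply] using this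
      · exact ContinuousLinearMap.isClosed_ker C
    exact hle hy
  ext x
  have hxK : x ∈ K := by
    have hx : E x = x := by rw [hE1]; rfl
    rw [← hx]
    exact (K.orthogonalProjectionOnto x).2
  simpa using hker x hxK


/-- **Claims 9–10 of Theorem 1.2.** A nonlinear ξ-Lie derivation `Φ` with
`Φ P₁ = Φ P₂ = 0` is additive across the Peirce decomposition. -/
theorem xiLie_additive_on_peirce_sum (M : VonNeumannAlgebra H)
    (hM : VNNoTypeI1 M)
    (P₁ : H →L[ℂ] H) (hproj : VNProjection M P₁)
    (hnt : P₁ ≠ 0 ∧ P₁ ≠ 1) (hcf : VNCoreFree M P₁)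
    (hcc : VNCentralCarrier M P₁ 1)
    (ξ : ℂ) (hξ0 : ξ ≠ 0) (hξ1 : ξ ≠ 1)
    (Φ : (H →L[ℂ] H) → (H →L[ℂ] H))
    (hmaps : ∀ T ∈ M, Φ T ∈ M)
    (hlie : ∀ A ∈ M, ∀ B ∈ M,
      Φ (A * B - ξ • (B * A)) =
        (Φ A * B - ξ • (B * Φ A)) + (A * Φ B - ξ • (Φ B * A)))
    (hP1 : Φ P₁ = 0) (hP2 : Φ (1 - P₁) = 0) :
    ∀ T₁₁ ∈ M, P₁ * T₁₁ * P₁ = T₁₁ →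
      ∀ T₁₂ ∈ M, P₁ * T₁₂ * (1 - P₁) = T₁₂ →
        ∀ T₂₁ ∈ M, (1 - P₁) * T₂₁ * P₁ = T₂₁ →
          ∀ T₂₂ ∈ M, (1 - P₁) * T₂₂ * (1 - P₁) = T₂₂ →
            Φ (T₁₁ + T₁₂ + T₂₁ + T₂₂) = Φ T₁₁ + Φ T₁₂ + Φ T₂₁ + Φ T₂₂ := by
  intro T11 hm11 h11 T12 hm12 h12 T21 hm21 h21 T22 hm22 h22
  obtain ⟨hPmem, hPsa, hPP⟩ := hproj
  have hQmem : (1 : H →L[ℂ] H) - P₁ ∈ M := sub_mem (one_mem M) hPmem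
  have hQsa : IsSelfAdjoint ((1 : H →L[ℂ] H) - P₁) := (IsSelfAdjoint.one (R := H →L[ℂ] H)).sub hPsa
  -- the two minimality facts
  have hminP : ∀ Z : H →L[ℂ] H, Z ∈ M → (∀ T ∈ M, Z * T = T * Z) → IsSelfAdjoint Z →
      Z * Z = Z → Z * P₁ = P₁ → Z = 1 := by
    intro Z hZm hZc hZsa hZi hZP
    have hcp : VNCentralProjection M Z := ⟨⟨hZm, hZsa, hZi⟩, hZc⟩
    have := hcc.2.2 Z hcp hZP
    rwa [one_mul] at this
  have hminQ : ∀ Z : H →L[ℂ] H, Z ∈ M → (∀ T ∈ M, Z * T = T * Z) → IsSelfAdjoint Z →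
      Z * Z = Z → Z * (1 - P₁) = (1 - P₁) → Z = 1 := by
    intro Z hZm hZc hZsa hZi hZQ
    have hZ'm : (1 : H →L[ℂ] H) - Z ∈ M := sub_mem (one_mem M) hZm
    have hZ'c : ∀ T ∈ M, (1 - Z) * T = T * (1 - Z) := by
      intro T hT
      rw [sub_mul, mul_sub, one_mul, mul_one, hZc T hT]
    have hZ'sa : IsSelfAdjoint ((1 : H →L[ℂ] H) - Z) := (IsSelfAdjoint.one (R := H →L[ℂ] H)).sub hZsa
    have hZ'i : ((1 : H →L[ℂ] H) - Z) * (1 - Z) = 1 - Z := by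
      rw [sub_mul, one_mul, mul_sub, mul_one, hZi]
      abel
    have hZ'P : ((1 : H →L[ℂ] H) - Z) * P₁ = 1 - Z := by
      rw [mul_sub, mul_one] at hZQ
      rw [sub_mul, one_mul]
      -- hZQ : Z - Z * P₁ = 1 - P₁  ⊢ P₁ - Z * P₁ = 1 - Z
      have h' : (Z - Z * P₁) + P₁ - Z = (1 - P₁) + P₁ - Z := by rw [hZQ]
      calc P₁ - Z * P₁ = (Z - Z * P₁) + P₁ - Z := by abel
        _ = (1 - P₁) + P₁ - Z := h'
        _ = 1 - Z := by abel
    have hz := hcf (1 - Z) ⟨⟨hZ'm, hZ'sa, hZ'i⟩, hZ'c⟩ hZ'P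
    have : (1 : H →L[ℂ] H) = Z := by rwa [sub_eq_zero] at hz
    exact this.symm
  -- annihilation lemmas
  have annP : ∀ C : H →L[ℂ] H, (∀ T ∈ M, C * (T * P₁) = 0) → C = 0 :=
    fun C hC => vn_ann_right M P₁ hPmem hminP C hC
  have annQ : ∀ C : H →L[ℂ] H, (∀ T ∈ M, C * (T * (1 - P₁)) = 0) → C = 0 :=
    fun C hC => vn_ann_right M (1 - P₁) hQmem hminQ C hC
  have annLP : ∀ C : H →L[ℂ] H, (∀ T ∈ M, P₁ * (T * C) = 0) → C = 0 := by
    intro C hC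
    have hstar : ∀ T ∈ M, star C * (T * P₁) = 0 := by
      intro T hT
      have h0 := hC (star T) (star_mem hT)
      have : star (P₁ * (star T * C)) = star C * (T * P₁) := by
        rw [star_mul, star_mul, star_star, hPsa.star_eq, mul_assoc]
      rw [← this, h0, star_zero]
    have := annP (star C) hstar
    have := congrArg star this
    rwa [star_star, star_zero] at this
  have annLQ : ∀ C : H →L[ℂ] H, (∀ T ∈ M, (1 - P₁) * (T * C) = 0) → C = 0 := by
    intro C hC
    have hstar : ∀ T ∈ M, star C * (T * (1 - P₁)) = 0 := by
      intro T hT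
      have h0 := hC (star T) (star_mem hT)
      have : star ((1 - P₁) * (star T * C)) = star C * (T * (1 - P₁)) := by
        rw [star_mul, star_mul, star_star, hQsa.star_eq, mul_assoc]
      rw [← this, h0, star_zero]
    have := annQ (star C) hstar
    have := congrArg star this
    rwa [star_star, star_zero] at this
  -- smul membership
  have memSmul : ∀ (c : ℂ) {a : H →L[ℂ] H}, a ∈ M → c • a ∈ M := by
    intro c a ha
    rw [Algebra.smul_def]
    exact mul_mem (M.toStarSubalgebra.toSubalgebra.algebraMap_mem c) ha
  -- assemble the algebraic setup
  let s : XiSetup (H →L[ℂ] H) :=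
    { ξ := ξ
      P := P₁
      Q := 1 - P₁
      Mem := fun x => x ∈ M
      Φ := Φ
      hξ0 := hξ0
      hξ1 := hξ1
      hPP := hPP
      hPQ := by rw [mul_sub, mul_one, hPP, sub_self]
      hQP := by rw [sub_mul, one_mul, hPP, sub_self]
      hQQ := by rw [sub_mul, one_mul, mul_sub, mul_one, hPP]; abel
      hPQ1 := by abel
      hPm := hPmem
      hQm := hQmem
      memMul := fun ha hb => mul_mem ha hb
      memAdd := fun ha hb => add_mem ha hb
      memSmul := fun c _ ha => memSmul c ha
      hlie := hlie
      hP0 := hP1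
      hQ0 := hP2
      annRQ := fun C hC => annQ C (fun T hT => hC T hT)
      annRP := fun C hC => annP C (fun T hT => hC T hT)
      annLQ := fun C hC => annLQ C (fun T hT => hC T hT)
      annLP := fun C hC => annLP C (fun T hT => hC T hT) }
  exact XiSetup.main s hm11 h11 hm12 h12 hm21 h21 hm22 h22
end
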